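/- arXiv:math/0303221 — 8 statements merged into one kernel-verified Lean document; each statement's English description precedes it below -/
import Mathlib

section
/- Define, for a sequence a and a parameter x in a commutative ring (or x a polynomial variable), the x-interpolated invert transform I^x(a) = (I_0(x), I_1(x), ...) by the generating series identity ∑_{n≥0} I_n(x) t^n = A(t)/(1 + x·t·A(t)), where A(t) = ∑ a_n t^n. Then I^x(I^y(a)) = I^{x+y}(a) for all x, y. -/
open PowerSeries

/-- The `x`-interpolated invert transform: the sequence whose generating series is
`A(t)/(1 + x·t·A(t))`, the inverse being taken via `invOfUnit` (the constant
coefficient of `1 + x·t·A(t)` is `1`). -/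
noncomputable def interpInvert {R : Type*} [CommRing R] (x : R) (a : ℕ → R) : ℕ → R :=
  fun n => PowerSeries.coeff n
    (PowerSeries.mk a *
      PowerSeries.invOfUnit (1 + PowerSeries.C x * PowerSeries.X * PowerSeries.mk a) 1)

/-- `I^x(I^y(a)) = I^{x+y}(a)`. -/
theorem stmt2 {R : Type*} [CommRing R] (x y : R) (a : ℕ → R) :
    interpInvert x (interpInvert y a) = interpInvert (x + y) a := by
  set A := PowerSeries.mk a with hA
  set u := 1 + PowerSeries.C y * PowerSeries.X * A with hu
  set B := A * PowerSeries.invOfUnit u 1 with hB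
  have hcu : PowerSeries.constantCoeff u = ((1 : Rˣ) : R) := by simp [hu]
  have hmk : PowerSeries.mk (interpInvert y a) = B := by
    ext n; simp [interpInvert, hB, hA, hu]
  set v := 1 + PowerSeries.C x * PowerSeries.X * B with hv
  set w := 1 + PowerSeries.C (x + y) * PowerSeries.X * A with hw
  have hcv : PowerSeries.constantCoeff v = ((1 : Rˣ) : R) := by
    simp [hv, hB]
  have hcw : PowerSeries.constantCoeff w = ((1 : Rˣ) : R) := by simp [hw]
  have hBu : B * u = A := by
    rw [hB, mul_assoc, mul_comm (PowerSeries.invOfUnit u 1) u,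
      PowerSeries.mul_invOfUnit u 1 hcu, mul_one]
  have hvu : v * u = w := by
    calc v * u = u + PowerSeries.C x * PowerSeries.X * (B * u) := by
          rw [hv]; ring
      _ = w := by rw [hBu, hu, hw, map_add]; ring
  have hw1 : w * PowerSeries.invOfUnit w 1 = 1 := PowerSeries.mul_invOfUnit w 1 hcw
  have hv1 : PowerSeries.invOfUnit v 1 * v = 1 := by
    rw [mul_comm]; exact PowerSeries.mul_invOfUnit v 1 hcv
  have key : B * PowerSeries.invOfUnit v 1 = A * PowerSeries.invOfUnit w 1 := by
    calc B * PowerSeries.invOfUnit v 1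
        = B * PowerSeries.invOfUnit v 1 * ((v * u) * PowerSeries.invOfUnit w 1) := by
          rw [hvu, hw1, mul_one]
      _ = B * (PowerSeries.invOfUnit v 1 * v) * u * PowerSeries.invOfUnit w 1 := by ring
      _ = A * PowerSeries.invOfUnit w 1 := by rw [hv1, mul_one, hBu]
  funext n
  show PowerSeries.coeff n (PowerSeries.mk (interpInvert y a) *
      PowerSeries.invOfUnit (1 + PowerSeries.C x * PowerSeries.X *
        PowerSeries.mk (interpInvert y a)) 1) = _
  rw [hmk]
  exact congrArg (PowerSeries.coeff n) key
end

section
/- Let a = (a_0 = 1, a_1, a_2, ...) and define I_n(x) by ∑_{n≥0} I_n(x) t^n = A(t)/(1 + x t A(t)) with A(t) = ∑ a_n t^n. Then I_n(x) = ∑_{k=0}^n (−x)^k · ∑_{ν} C(1+k; ν) a^ν, where the inner sum runs over all partitions ν = (1^{ν_1}·2^{ν_2}·...) of n−k, a^ν = ∏_j a_j^{ν_j}, and C(1+k; ν) = (1+k)!/((∏_j ν_j!)·(1+k−∑_j ν_j)!) is the multinomial coefficient. -/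
open PowerSeries

section StmtAux
open Finset

lemma vals_eq_cons {α : Type*} {n : ℕ} (h : Fin (n+1) → α) (p : Fin (n+1)) :
    Multiset.map h Finset.univ.val =
      h p ::ₘ Multiset.map (h ∘ p.succAbove) Finset.univ.val := by
  rw [Fin.univ_succAbove _ p]
  simp only [Finset.cons_val, Multiset.map_cons, Finset.map_val, Multiset.map_map]
  rfl

lemma exists_comp_perm {α : Type*} [DecidableEq α] :
    ∀ {n : ℕ} (f g : Fin n → α),
    Multiset.map f Finset.univ.val = Multiset.map g Finset.univ.val →
    ∃ σ : Equiv.Perm (Fin n), f = g ∘ σ := by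
  intro n
  induction n with
  | zero => exact fun f g _ => ⟨1, funext fun i => i.elim0⟩
  | succ n ih =>
    intro f g h
    have hf0 : f 0 ∈ Multiset.map g Finset.univ.val := by
      rw [← h]; exact Multiset.mem_map_of_mem f (Finset.mem_univ_val _)
    obtain ⟨p, -, hp⟩ := Multiset.mem_map.mp hf0
    have h' : Multiset.map (f ∘ Fin.succ) Finset.univ.val =
        Multiset.map (g ∘ p.succAbove) Finset.univ.val := by
      have h1 := vals_eq_cons f 0
      have h2 := vals_eq_cons g p
      rw [Fin.succAbove_zero] at h1
      rw [h1, h2, hp] at h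
      exact (Multiset.cons_inj_right _).mp h
    obtain ⟨τ, hτ⟩ := ih _ _ h'
    refine ⟨(finSuccEquiv n).trans ((Equiv.optionCongr τ).trans
      (finSuccEquiv' p).symm), ?_⟩
    funext i
    induction i using Fin.cases with
    | zero => simp [hp.symm]
    | succ i =>
      have := congrFun hτ i
      simp only [Function.comp_apply] at this ⊢
      simpa using this

lemma card_image_comp_perm {α : Type*} [DecidableEq α] {N : ℕ} (l0 : Fin N → α) :
    ((univ : Finset (Equiv.Perm (Fin N))).image (fun σ : Equiv.Perm (Fin N) => l0 ∘ ⇑σ)).card *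
      ∏ i ∈ (Multiset.map l0 univ.val).toFinset,
        ((Multiset.map l0 univ.val).count i).factorial = N.factorial := by
  classical
  have fiber_card : ∀ τ : Equiv.Perm (Fin N),
      (univ.filter fun σ : Equiv.Perm (Fin N) => l0 ∘ ⇑σ = l0 ∘ ⇑τ).card =
      (univ.filter fun σ : Equiv.Perm (Fin N) => l0 ∘ ⇑σ = l0).card := by
    intro τ
    apply Finset.card_bij (fun σ _ => σ * τ⁻¹)
    · intro σ hσ
      simp only [mem_filter, mem_univ, true_and] at hσ ⊢
      funext x
      simpa using congrFun hσ (τ⁻¹ x)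
    · intro σ _ σ' _ h
      exact mul_right_cancel h
    · intro ρ hρ
      simp only [mem_filter, mem_univ, true_and] at hρ
      refine ⟨ρ * τ, ?_, by group⟩
      simp only [mem_filter, mem_univ, true_and]
      funext x
      exact congrFun hρ (τ x)
  have stab : (univ.filter fun σ : Equiv.Perm (Fin N) => l0 ∘ ⇑σ = l0).card =
      ∏ i ∈ (Multiset.map l0 univ.val).toFinset,
        ((Multiset.map l0 univ.val).count i).factorial := by
    rw [← Fintype.card_subtype, DomMulAct.stabilizer_card' l0]
    apply Finset.prod_congr
    · ext i
      simp [Multiset.mem_toFinset, Finset.mem_image, Multiset.mem_map, List.mem_ofFn, eq_comm]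
    · intro i _
      congr 1
      rw [Fintype.card_subtype, Multiset.count_map, Finset.card, Finset.filter_val]
      exact congrArg Multiset.card (Multiset.filter_congr fun x _ => eq_comm)
  have step : ∀ l ∈ (univ : Finset (Equiv.Perm (Fin N))).image
      (fun σ : Equiv.Perm (Fin N) => l0 ∘ ⇑σ),
      (univ.filter fun σ : Equiv.Perm (Fin N) => l0 ∘ ⇑σ = l).card =
      ∏ i ∈ (Multiset.map l0 univ.val).toFinset,
        ((Multiset.map l0 univ.val).count i).factorial := by
    intro l hl
    obtain ⟨τ, -, rfl⟩ := Finset.mem_image.mp hl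
    rw [fiber_card τ, stab]
  calc ((univ : Finset (Equiv.Perm (Fin N))).image
          (fun σ : Equiv.Perm (Fin N) => l0 ∘ ⇑σ)).card *
        ∏ i ∈ (Multiset.map l0 univ.val).toFinset,
          ((Multiset.map l0 univ.val).count i).factorial
      = ∑ _l ∈ (univ : Finset (Equiv.Perm (Fin N))).image
          (fun σ : Equiv.Perm (Fin N) => l0 ∘ ⇑σ),
          ∏ i ∈ (Multiset.map l0 univ.val).toFinset,
            ((Multiset.map l0 univ.val).count i).factorial := by
        rw [Finset.sum_const, smul_eq_mul]
    _ = ∑ l ∈ (univ : Finset (Equiv.Perm (Fin N))).image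
          (fun σ : Equiv.Perm (Fin N) => l0 ∘ ⇑σ),
          (univ.filter fun σ : Equiv.Perm (Fin N) => l0 ∘ ⇑σ = l).card :=
        Finset.sum_congr rfl fun l hl => (step l hl).symm
    _ = (univ : Finset (Equiv.Perm (Fin N))).card := (Finset.card_eq_sum_card_image _ _).symm
    _ = N.factorial := by rw [Finset.card_univ, Fintype.card_perm, Fintype.card_fin]

lemma card_fiber_mul {N m : ℕ} (μ : Multiset ℕ) (hcard : Multiset.card μ = N)
    (hsum : μ.sum = m) :
    ((Finset.Nat.antidiagonalTuple N m).filter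
        (fun l => Multiset.map l Finset.univ.val = μ)).card *
      ∏ i ∈ μ.toFinset, (μ.count i).factorial = N.factorial := by
  classical
  obtain ⟨L, rfl⟩ : ∃ L : List ℕ, (↑L : Multiset ℕ) = μ := ⟨μ.toList, μ.coe_toList⟩
  have hlen : L.length = N := by simpa using hcard
  subst hlen
  set l0 : Fin L.length → ℕ := L.get with hl0def
  have hl0 : Multiset.map l0 Finset.univ.val = (↑L : Multiset ℕ) := by
    rw [Fin.univ_def]
    show Multiset.map l0 ↑(List.finRange L.length) = _
    rw [Multiset.map_coe, ← List.ofFn_eq_map, hl0def, List.ofFn_get]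
  have himg : (Finset.Nat.antidiagonalTuple L.length m).filter
      (fun l => Multiset.map l Finset.univ.val = (↑L : Multiset ℕ)) =
      (univ : Finset (Equiv.Perm (Fin L.length))).image
        (fun σ : Equiv.Perm (Fin L.length) => l0 ∘ ⇑σ) := by
    ext l
    simp only [mem_filter, Finset.mem_image, Finset.Nat.mem_antidiagonalTuple, mem_univ, true_and]
    constructor
    · rintro ⟨-, hvals⟩
      obtain ⟨σ, rfl⟩ := exists_comp_perm l l0 (hvals.trans hl0.symm)
      exact ⟨σ, rfl⟩
    · rintro ⟨σ, rfl⟩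
      have hv : Multiset.map (l0 ∘ ⇑σ) Finset.univ.val = (↑L : Multiset ℕ) := by
        rw [← Multiset.map_map, ← hl0]
        congr 1
        have : (Finset.univ.map σ.toEmbedding).val = Finset.univ.val := by
          rw [Finset.map_univ_equiv]
        simpa [Finset.map_val] using this
      refine ⟨?_, hv⟩
      rw [show (∑ i, (l0 ∘ ⇑σ) i) = (Multiset.map (l0 ∘ ⇑σ) Finset.univ.val).sum from
        Finset.sum_eq_multiset_sum _ _, hv, hsum]
  rw [himg, ← hl0]
  exact card_image_comp_perm l0

-- inner sum over a fiber
lemma inner_sum_eq {R : Type*} [CommRing R] [Algebra ℚ R] (b : ℕ → R) (hb : b 0 = 1)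
    {N m : ℕ} (ν : Nat.Partition m) :
    ∑ l ∈ (Finset.Nat.antidiagonalTuple N m).filter
        (fun l => (Multiset.map l Finset.univ.val).filter (· ≠ 0) = ν.parts),
      ∏ i : Fin N, b (l i) =
    (if ν.parts.card ≤ N then
        (N.factorial : ℚ) /
          ((∏ j ∈ ν.parts.toFinset, ((ν.parts.count j).factorial : ℚ)) *
            ((N - ν.parts.card).factorial : ℚ))
      else 0) • (ν.parts.map b).prod := by
  classical
  set c := Multiset.card ν.parts with hc
  -- each term in the fiber equals the fixed product
  have hterm : ∀ l ∈ (Finset.Nat.antidiagonalTuple N m).filter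
      (fun l => (Multiset.map l Finset.univ.val).filter (· ≠ 0) = ν.parts),
      (∏ i : Fin N, b (l i)) = (ν.parts.map b).prod := by
    intro l hl
    rw [Finset.mem_filter] at hl
    obtain ⟨-, hfil⟩ := hl
    set s := Multiset.map l Finset.univ.val with hs
    have h1 : (∏ i : Fin N, b (l i)) = (s.map b).prod := by
      rw [Finset.prod_eq_multiset_prod, hs, Multiset.map_map]
      rfl
    rw [h1, ← Multiset.filter_add_not (· ≠ 0) s, Multiset.map_add, Multiset.prod_add, hfil]
    have h2 : ((s.filter (fun x => ¬ x ≠ 0)).map b).prod = 1 := by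
      apply Multiset.prod_eq_one
      intro x hx
      obtain ⟨y, hy, rfl⟩ := Multiset.mem_map.mp hx
      have := Multiset.of_mem_filter hy
      simp only [ne_eq, not_not] at this
      rw [this, hb]
    rw [h2, mul_one]
  rw [Finset.sum_congr rfl hterm, Finset.sum_const]
  by_cases hcN : c ≤ N
  · rw [if_pos (by exact hcN)]
    set μ : Multiset ℕ := ν.parts + Multiset.replicate (N - c) 0 with hμ
    have hcardμ : Multiset.card μ = N := by
      rw [hμ, Multiset.card_add, Multiset.card_replicate, ← hc]
      omega
    have hsumμ : μ.sum = m := by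
      rw [hμ, Multiset.sum_add, Multiset.sum_replicate, smul_zero, add_zero, ν.parts_sum]
    -- the fiber equals the set of tuples with value multiset μ
    have hfib : (Finset.Nat.antidiagonalTuple N m).filter
        (fun l => (Multiset.map l Finset.univ.val).filter (· ≠ 0) = ν.parts) =
        (Finset.Nat.antidiagonalTuple N m).filter
        (fun l => Multiset.map l Finset.univ.val = μ) := by
      apply Finset.filter_congr
      intro l hl
      set s := Multiset.map l Finset.univ.val with hs
      have hcards : Multiset.card s = N := by
        rw [hs, Multiset.card_map, ← Finset.card_def, Finset.card_univ, Fintype.card_fin]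
      constructor
      · intro hfil
        have hsplit := (Multiset.filter_add_not (· ≠ 0) s).symm
        have hzero : s.filter (fun x => ¬ x ≠ 0) =
            Multiset.replicate (N - c) 0 := by
          rw [Multiset.eq_replicate]
          constructor
          · have := congrArg Multiset.card hsplit
            rw [Multiset.card_add, hfil, ← hc] at this
            omega
          · intro b hb'
            have := Multiset.of_mem_filter hb'
            simpa using this
        rw [hμ, ← hfil, ← hzero]
        exact hsplit
      · intro hval
        rw [hval, hμ, Multiset.filter_add,
          Multiset.filter_eq_self.mpr (fun x hx => (ν.parts_pos hx).ne'),
          Multiset.filter_eq_nil.mpr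
            (fun a ha => by simp [Multiset.eq_of_mem_replicate ha]), add_zero]
    rw [hfib]
    -- counting
    have hcount := card_fiber_mul μ hcardμ hsumμ
    have h0parts : (0 : ℕ) ∉ ν.parts := fun h => (ν.parts_pos h).false
    have hcount0 : μ.count 0 = N - c := by
      rw [hμ, Multiset.count_add, Multiset.count_eq_zero.mpr h0parts,
        Multiset.count_replicate, if_pos rfl, zero_add]
    have hcountj : ∀ j, j ≠ 0 → μ.count j = ν.parts.count j := by
      intro j hj
      rw [hμ, Multiset.count_add, Multiset.count_replicate, if_neg (fun h => hj h.symm), add_zero]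
    have hprod : ∏ i ∈ μ.toFinset, (μ.count i).factorial =
        (∏ j ∈ ν.parts.toFinset, (ν.parts.count j).factorial) * (N - c).factorial := by
      have hsub : μ.toFinset ⊆ insert 0 ν.parts.toFinset := by
        intro x hx
        rw [Multiset.mem_toFinset, hμ, Multiset.mem_add] at hx
        rcases hx with hx | hx
        · exact Finset.mem_insert_of_mem (Multiset.mem_toFinset.mpr hx)
        · rw [Multiset.eq_of_mem_replicate hx]; exact Finset.mem_insert_self _ _
      rw [Finset.prod_subset hsub (fun x _ hx =>  by
        rw [Multiset.count_eq_zero.mpr (fun h => hx (Multiset.mem_toFinset.mpr h))]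
        rfl)]
      rw [Finset.prod_insert (fun h => h0parts (Multiset.mem_toFinset.mp h)), hcount0]
      rw [Finset.prod_congr rfl (fun j hj => by
        rw [hcountj j (fun h => h0parts (h ▸ Multiset.mem_toFinset.mp hj))]), mul_comm]
    -- identify the rational scalar with the natural card
    set T := ((Finset.Nat.antidiagonalTuple N m).filter
        (fun l => Multiset.map l Finset.univ.val = μ)) with hT
    have hcast : ((N.factorial : ℚ) /
        ((∏ j ∈ ν.parts.toFinset, ((ν.parts.count j).factorial : ℚ)) *
          ((N - c).factorial : ℚ))) = (T.card : ℚ) := by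
      have hne : ((∏ j ∈ ν.parts.toFinset, ((ν.parts.count j).factorial : ℚ)) *
          ((N - c).factorial : ℚ)) ≠ 0 := by
        apply mul_ne_zero
        · apply Finset.prod_ne_zero_iff.mpr
          intro j _
          exact_mod_cast (Nat.factorial_pos _).ne'
        · exact_mod_cast (Nat.factorial_pos _).ne'
      rw [div_eq_iff hne]
      rw [← hcount, hprod]
      push_cast
      ring
    rw [hcast, Nat.cast_smul_eq_nsmul]
  · rw [if_neg hcN]
    have : (Finset.Nat.antidiagonalTuple N m).filter
        (fun l => (Multiset.map l Finset.univ.val).filter (· ≠ 0) = ν.parts) = ∅ := by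
      rw [Finset.filter_eq_empty_iff]
      intro l _
      intro hfil
      apply hcN
      rw [hc, ← hfil]
      calc Multiset.card ((Multiset.map l Finset.univ.val).filter (· ≠ 0))
          ≤ Multiset.card (Multiset.map l Finset.univ.val) := Multiset.card_le_card (Multiset.filter_le _ _)
        _ = N := by rw [Multiset.card_map, ← Finset.card_def, Finset.card_univ, Fintype.card_fin]
    rw [this, Finset.card_empty, zero_smul, zero_smul]

lemma coeff_mk_pow {R : Type*} [CommRing R] [Algebra ℚ R] (b : ℕ → R) (hb : b 0 = 1)
    (N m : ℕ) :
    PowerSeries.coeff (R := R) m ((PowerSeries.mk b) ^ N) =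
    ∑ ν : Nat.Partition m,
      (if ν.parts.card ≤ N then
        (N.factorial : ℚ) /
          ((∏ j ∈ ν.parts.toFinset, ((ν.parts.count j).factorial : ℚ)) *
            ((N - ν.parts.card).factorial : ℚ))
      else 0) • (ν.parts.map b).prod := by
  classical
  -- Step 1: coefficient of a power as a sum over tuples
  have h1 : PowerSeries.coeff (R := R) m ((PowerSeries.mk b) ^ N) =
      ∑ l ∈ Finset.Nat.antidiagonalTuple N m, ∏ i : Fin N, b (l i) := by
    rw [PowerSeries.coeff_pow]
    refine Finset.sum_nbij' (fun l => fun i : Fin N => l i.val)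
      (fun t => Finsupp.onFinset (Finset.range N)
        (fun j => if h : j < N then t ⟨j, h⟩ else 0)
        (fun j hj => by
          rw [Finset.mem_range]
          by_contra hjN
          simp only [dif_neg hjN] at hj
          exact hj rfl)) ?_ ?_ ?_ ?_ ?_
    · intro l hl
      rw [Finset.mem_finsuppAntidiag] at hl
      rw [Finset.Nat.mem_antidiagonalTuple]
      rw [← hl.1, Finset.sum_range]
    · intro t ht
      rw [Finset.Nat.mem_antidiagonalTuple] at ht
      rw [Finset.mem_finsuppAntidiag]
      refine ⟨?_, Finsupp.support_onFinset_subset⟩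
      rw [Finset.sum_range]
      simp only [Finsupp.onFinset_apply]
      rw [← ht]
      exact Finset.sum_congr rfl fun i _ => by rw [dif_pos i.isLt]
    · intro l hl
      rw [Finset.mem_finsuppAntidiag] at hl
      ext j
      simp only [Finsupp.onFinset_apply]
      by_cases h : j < N
      · rw [dif_pos h]
      · rw [dif_neg h]
        symm
        by_contra h0
        have := hl.2 (Finsupp.mem_support_iff.mpr h0)
        rw [Finset.mem_range] at this
        exact h this
    · intro t ht
      funext i
      simp only [Finsupp.onFinset_apply]
      rw [dif_pos i.isLt]
    · intro l hl
      rw [Finset.prod_range]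
      simp [PowerSeries.coeff_mk]
  rw [h1]
  -- Step 2: fiberwise regrouping over partitions
  set g : (Fin N → ℕ) → Nat.Partition m := fun l =>
    if h : (Multiset.map l Finset.univ.val).sum = m then
      Nat.Partition.ofSums m (Multiset.map l Finset.univ.val) h
    else Nat.Partition.indiscrete m with hg
  rw [← Finset.sum_fiberwise (Finset.Nat.antidiagonalTuple N m) g
    (fun l => ∏ i : Fin N, b (l i))]
  apply Finset.sum_congr rfl
  intro ν _
  have hfilt : (Finset.Nat.antidiagonalTuple N m).filter (fun l => g l = ν) =
      (Finset.Nat.antidiagonalTuple N m).filter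
        (fun l => (Multiset.map l Finset.univ.val).filter (· ≠ 0) = ν.parts) := by
    apply Finset.filter_congr
    intro l hl
    rw [Finset.Nat.mem_antidiagonalTuple] at hl
    have hsum : (Multiset.map l Finset.univ.val).sum = m := by
      rw [← hl, Finset.sum_eq_multiset_sum]
    rw [hg]
    simp only [dif_pos hsum]
    constructor
    · intro h; rw [← h]; rfl
    · intro h
      apply Nat.Partition.ext
      exact h
  rw [hfilt, inner_sum_eq b hb ν]

end StmtAux

/-- For `a₀ = 1` and `Iₙ(x)` defined by `∑ Iₙ(x) tⁿ = A(t)/(1 + x·t·A(t))`,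
`Iₙ(x) = ∑_{k=0}^n (−x)^k ∑_{ν ⊢ n−k} C(1+k; ν)·a^ν`, where the inner sum is over
partitions `ν` of `n − k`, `a^ν = ∏ aⱼ^{νⱼ}` and
`C(1+k; ν) = (1+k)!/((∏ νⱼ!)·(1+k−∑νⱼ)!)` (zero when `∑ νⱼ > 1+k`). -/
theorem stmt4 {A : Type*} [CommRing A] [Algebra ℚ A] (a : ℕ → A) (ha : a 0 = 1) (n : ℕ) :
    PowerSeries.coeff (R := Polynomial A) n
      ((PowerSeries.mk fun m => Polynomial.C (a m)) *
        PowerSeries.invOfUnit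
          (1 + PowerSeries.C (R := Polynomial A) Polynomial.X * PowerSeries.X *
            PowerSeries.mk fun m => Polynomial.C (a m)) 1) =
    ∑ k ∈ Finset.range (n + 1), (-(Polynomial.X : Polynomial A)) ^ k *
      ∑ ν : Nat.Partition (n - k),
        (if ν.parts.card ≤ k + 1 then
          ((k + 1).factorial : ℚ) /
            ((∏ j ∈ ν.parts.toFinset, ((ν.parts.count j).factorial : ℚ)) *
              ((k + 1 - ν.parts.card).factorial : ℚ))
        else 0) • Polynomial.C (ν.parts.map a).prod := by
  classical
  set R := Polynomial A
  set M : R⟦X⟧ := PowerSeries.mk fun m => Polynomial.C (a m) with hM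
  set Y : R⟦X⟧ := PowerSeries.C (R := R) Polynomial.X * PowerSeries.X * M with hY
  set B : R⟦X⟧ := PowerSeries.invOfUnit (1 + Y) 1 with hB
  have hconst : constantCoeff (R := R) (1 + Y) = 1 := by
    simp [hY, hM]
  have hinv : (1 + Y) * B = 1 := PowerSeries.mul_invOfUnit _ _ hconst
  set G : R⟦X⟧ := ∑ k ∈ Finset.range (n + 1), (-Y) ^ k with hG
  have hgeom : (1 + Y) * G = 1 - (-Y) ^ (n + 1) := by
    have h3 := geom_sum_mul (-Y) (n + 1)
    rw [hG]
    linear_combination -h3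
  have hMG : M * G = M * B - M * B * (-Y) ^ (n + 1) := by
    calc M * G = M * G * ((1 + Y) * B) := by rw [hinv, mul_one]
      _ = M * B * ((1 + Y) * G) := by ring
      _ = M * B * (1 - (-Y) ^ (n + 1)) := by rw [hgeom]
      _ = M * B - M * B * (-Y) ^ (n + 1) := by ring
  have hvanish : PowerSeries.coeff (R := R) n (M * B * (-Y) ^ (n + 1)) = 0 := by
    have hrw : M * B * (-Y) ^ (n + 1) =
        (M * B * (-(PowerSeries.C (R := R) Polynomial.X * M)) ^ (n + 1)) * X ^ (n + 1) := by
      rw [hY]; ring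
    rw [hrw, PowerSeries.coeff_mul_X_pow']
    rw [if_neg (by omega)]
  have hcoeff : PowerSeries.coeff (R := R) n (M * B) =
      ∑ k ∈ Finset.range (n + 1), PowerSeries.coeff (R := R) n (M * (-Y) ^ k) := by
    have := congrArg (PowerSeries.coeff (R := R) n) hMG
    rw [map_sub, hvanish, sub_zero] at this
    rw [← this, hG, Finset.mul_sum, map_sum]
  rw [hcoeff]
  apply Finset.sum_congr rfl
  intro k hk
  rw [Finset.mem_range] at hk
  have hterm : M * (-Y) ^ k = (PowerSeries.C (R := R) ((-Polynomial.X) ^ k) * M ^ (k + 1)) * X ^ k := by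
    rw [hY, map_pow, map_neg]; ring
  rw [hterm, PowerSeries.coeff_mul_X_pow', if_pos (by omega), PowerSeries.coeff_C_mul]
  congr 1
  rw [coeff_mk_pow (fun m => Polynomial.C (a m)) (by simp [ha]) (k + 1) (n - k)]
  apply Finset.sum_congr rfl
  intro ν _
  congr 1
  have hmm := map_multiset_prod (Polynomial.C : A →+* Polynomial A) (ν.parts.map a)
  rw [Multiset.map_map] at hmm
  exact hmm.symm
end

section
/- Let b = I(a) be the invert transform of a sequence a (with (1 + tA(t))(1 − tB(t)) = 1), and extend b by setting b_{−1} = −1 and b_{−k} = 0 for k ≥ 2. Then for every n ≥ 1, the determinant of the n×n matrix M with M_{i,j} = b_{i−j}, 0 ≤ i, j < n, equals a_{n−1}. -/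
open PowerSeries Finset

private lemma conv_aux {R : Type*} [CommRing R] (b c : ℕ → R) (hc0 : c 0 = 1)
    (key : ∀ d, ∑ m ∈ Finset.range (d+1), b m * c (d - m) = c (d+1))
    (n i k : ℕ) (hi : i < n) (hk : k < n) :
    ∑ j ∈ Finset.range n,
      (if j ≤ i then b (i-j) else if j = i+1 then (-1:R) else 0) *
      (if k ≤ j then c (j-k) else 0)
    = if i + 1 = n then c (i+1-k) else if k = i+1 then -1 else 0 := by
  have key' : ∀ d, ∑ m ∈ Finset.range (d+1), b (d - m) * c m = c (d+1) := by
    intro d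
    rw [← key d, ← Finset.sum_range_reflect (fun m => b m * c (d - m)) (d+1)]
    refine Finset.sum_congr rfl fun m hm => ?_
    rw [Finset.mem_range] at hm
    have h1 : d + 1 - 1 - m = d - m := by omega
    have h2 : d - (d - m) = m := by omega
    rw [h1, h2]
  set F : ℕ → R := fun j =>
      (if j ≤ i then b (i-j) else if j = i+1 then (-1:R) else 0) *
      (if k ≤ j then c (j-k) else 0) with hF
  have hIco : ∀ m₁ m₂ : ℕ, k ≤ m₁ → m₂ ≤ i + 1 →
      ∑ j ∈ Finset.Ico m₁ m₂, F j = ∑ j ∈ Finset.Ico m₁ m₂,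
        (if j ≤ i then b (i-j) else -1) * c (j - k) := by
    intro m₁ m₂ h₁ h₂
    refine Finset.sum_congr rfl fun j hj => ?_
    rw [Finset.mem_Ico] at hj
    have hkj : k ≤ j := le_trans h₁ hj.1
    have hji : j ≤ i + 1 := by omega
    simp only [hF]
    rw [if_pos hkj]
    by_cases hji' : j ≤ i
    · rw [if_pos hji', if_pos hji']
    · rw [if_neg hji', if_neg hji', if_pos (by omega)]
  have hsplit : ∑ j ∈ Finset.range n, F j = ∑ j ∈ Finset.Ico k n, F j := by
    rw [← Finset.sum_range_add_sum_Ico F hk.le]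
    have : ∑ j ∈ Finset.range k, F j = 0 := by
      refine Finset.sum_eq_zero fun j hj => ?_
      rw [Finset.mem_range] at hj
      simp only [hF, if_neg (by omega : ¬ k ≤ j), mul_zero]
    rw [this, zero_add]
  rw [hsplit]
  have hmid : ∀ dk : ℕ, k ≤ i → ∑ j ∈ Finset.Ico k (i+1), F j = c (i+1-k) := by
    intro _ hki
    rw [hIco k (i+1) le_rfl le_rfl, Finset.sum_Ico_eq_sum_range]
    have hd : i + 1 - k = (i - k) + 1 := by omega
    rw [hd, ← key' (i - k)]
    refine Finset.sum_congr rfl fun m hm => ?_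
    rw [Finset.mem_range] at hm
    rw [if_pos (by omega : k + m ≤ i)]
    congr 2 <;> omega
  by_cases hki : i + 1 < k
  · have hz : ∑ j ∈ Finset.Ico k n, F j = 0 := by
      refine Finset.sum_eq_zero fun j hj => ?_
      rw [Finset.mem_Ico] at hj
      simp only [hF, if_neg (by omega : ¬ j ≤ i), if_neg (by omega : ¬ j = i + 1), zero_mul]
    rw [hz, if_neg (by omega), if_neg (by omega)]
  push_neg at hki
  by_cases hlast : i + 1 = n
  · rw [if_pos hlast]
    have hki' : k ≤ i := by omega
    have : Finset.Ico k n = Finset.Ico k (i+1) := by rw [hlast]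
    rw [this, hmid 0 hki']
  · rw [if_neg hlast]
    have hin : i + 2 ≤ n := by omega
    rw [← Finset.sum_Ico_consecutive F (by omega : k ≤ i + 2) hin]
    have hz2 : ∑ j ∈ Finset.Ico (i+2) n, F j = 0 := by
      refine Finset.sum_eq_zero fun j hj => ?_
      rw [Finset.mem_Ico] at hj
      simp only [hF, if_neg (by omega : ¬ j ≤ i), if_neg (by omega : ¬ j = i + 1), zero_mul]
    rw [hz2, add_zero, Finset.sum_Ico_succ_top (by omega : k ≤ i + 1)]
    have hFtop : F (i+1) = -c (i+1-k) := by
      show ((if i+1 ≤ i then b (i-(i+1)) else if i+1 = i+1 then (-1:R) else 0) *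
        (if k ≤ i+1 then c (i+1-k) else 0)) = -c (i+1-k)
      rw [if_neg (by omega : ¬ i + 1 ≤ i), if_pos rfl, if_pos hki]
      ring
    rw [hFtop]
    by_cases hke : k = i + 1
    · rw [if_pos hke]
      have : Finset.Ico k (i+1) = ∅ := by rw [hke]; simp
      rw [this, Finset.sum_empty, zero_add, hke, Nat.sub_self, hc0]
    · rw [if_neg hke, hmid 0 (by omega), add_neg_cancel]

/-- Let `b = I(a)` (invert transform: `(1 + t·A)(1 − t·B) = 1`), extended by
`b₋₁ = −1` and `b₋ₖ = 0` for `k ≥ 2`. Then for every `n ≥ 1` the determinant of the `n×n`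
Toeplitz (lower Hessenberg) matrix with `(i,j)`-entry `b_{i−j}` equals `a_{n−1}`. -/
theorem stmt5 {R : Type*} [CommRing R] (a b : ℕ → R)
    (h : (1 + PowerSeries.X * PowerSeries.mk a) *
          (1 - PowerSeries.X * PowerSeries.mk b) = 1)
    (n : ℕ) (hn : 1 ≤ n) :
    Matrix.det (Matrix.of fun i j : Fin n =>
      if (j : ℕ) ≤ (i : ℕ) then b ((i : ℕ) - (j : ℕ))
      else if (j : ℕ) = (i : ℕ) + 1 then -1 else 0) = a (n - 1) := by
  set C : PowerSeries R := 1 + PowerSeries.X * PowerSeries.mk a with hC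
  set c : ℕ → R := fun d => PowerSeries.coeff d C with hc
  have hc0 : c 0 = 1 := by
    simp [hc, hC, PowerSeries.coeff_zero_eq_constantCoeff]
  have hcs : ∀ d, c (d + 1) = a d := by
    intro d
    simp [hc, hC, PowerSeries.coeff_succ_X_mul]
  have hXbC : PowerSeries.X * (PowerSeries.mk b * C) = C - 1 := by
    have h2 : (1 - PowerSeries.X * PowerSeries.mk b) * C = 1 := by
      rw [mul_comm]; exact h
    linear_combination -h2
  have key : ∀ d, ∑ m ∈ Finset.range (d+1), b m * c (d - m) = c (d+1) := by
    intro d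
    have := congrArg (PowerSeries.coeff (d+1)) hXbC
    rw [PowerSeries.coeff_succ_X_mul, map_sub, PowerSeries.coeff_mul] at this
    rw [PowerSeries.coeff_one, if_neg (Nat.succ_ne_zero d), sub_zero] at this
    rw [Finset.Nat.sum_antidiagonal_eq_sum_range_succ_mk] at this
    simpa [hc] using this
  set M : Matrix (Fin n) (Fin n) R := Matrix.of fun i j : Fin n =>
      if (j : ℕ) ≤ (i : ℕ) then b ((i : ℕ) - (j : ℕ))
      else if (j : ℕ) = (i : ℕ) + 1 then -1 else 0 with hM
  set T : Matrix (Fin n) (Fin n) R := Matrix.of fun i j : Fin n =>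
      if (j : ℕ) ≤ (i : ℕ) then c ((i : ℕ) - (j : ℕ)) else 0 with hT
  set N : Matrix (Fin n) (Fin n) R := Matrix.of fun i k : Fin n =>
      if (i : ℕ) + 1 = n then c ((i : ℕ) + 1 - (k : ℕ))
      else if (k : ℕ) = (i : ℕ) + 1 then -1 else 0 with hN
  have hdetT : T.det = 1 := by
    rw [Matrix.det_of_lowerTriangular T]
    · refine Finset.prod_eq_one fun i _ => ?_
      simp [hT, hc0]
    · intro i j hij
      have hij' : (i : ℕ) < (j : ℕ) := hij
      show (if (j : ℕ) ≤ (i : ℕ) then c ((i : ℕ) - (j : ℕ)) else 0) = 0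
      rw [if_neg (by omega)]
  have hMT : M * T = N := by
    ext i k
    rw [Matrix.mul_apply]
    have hconv := conv_aux b c hc0 key n i k i.isLt k.isLt
    calc ∑ j : Fin n, M i j * T j k
        = ∑ j ∈ Finset.range n,
          (if j ≤ (i:ℕ) then b ((i:ℕ)-j) else if j = (i:ℕ)+1 then (-1:R) else 0) *
          (if (k:ℕ) ≤ j then c (j-(k:ℕ)) else 0) := by
          rw [← Fin.sum_univ_eq_sum_range (fun j =>
            (if j ≤ (i:ℕ) then b ((i:ℕ)-j) else if j = (i:ℕ)+1 then (-1:R) else 0) *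
            (if (k:ℕ) ≤ j then c (j-(k:ℕ)) else 0)) n]
          rfl
      _ = if (i:ℕ) + 1 = n then c ((i:ℕ)+1-(k:ℕ))
          else if (k:ℕ) = (i:ℕ)+1 then -1 else 0 := hconv
      _ = N i k := rfl
  have hdetN : N.det = a (n - 1) := by
    obtain ⟨m, rfl⟩ : ∃ m, n = m + 1 := ⟨n - 1, (Nat.succ_pred_eq_of_pos hn).symm⟩
    rw [Matrix.det_succ_column_zero]
    rw [Finset.sum_eq_single (Fin.last m)]
    · have hN0 : N (Fin.last m) 0 = a m := by
        simp only [hN, Matrix.of_apply, Fin.val_last, if_pos rfl, Fin.val_zero, Nat.sub_zero]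
        exact hcs m
      have hsub : (N.submatrix (Fin.last m).succAbove Fin.succ) =
          Matrix.diagonal (fun _ : Fin m => (-1 : R)) := by
        ext i j
        rw [Matrix.submatrix_apply, Fin.succAbove_last]
        have hlt : (i : ℕ) < m := i.isLt
        simp only [hN, Matrix.of_apply, Fin.coe_castSucc, Fin.val_succ]
        rw [if_neg (by omega)]
        by_cases hij : i = j
        · subst hij; rw [if_pos rfl, Matrix.diagonal_apply_eq]
        · rw [if_neg (by
            intro hcon
            exact hij (Fin.ext (by omega))), Matrix.diagonal_apply_ne _ hij]
      rw [hN0, hsub, Matrix.det_diagonal]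
      simp only [Fin.val_last, Finset.prod_const, Finset.card_univ, Fintype.card_fin,
        Nat.add_sub_cancel]
      have hpow : ((-1:R))^m * (-1:R)^m = 1 := by
        rw [← pow_add, ← two_mul, pow_mul, neg_one_sq, one_pow]
      linear_combination a m * hpow
    · intro i _ hilast
      have : N i 0 = 0 := by
        have hi : (i : ℕ) + 1 ≠ m + 1 := by
          intro hcon; exact hilast (Fin.ext (by rw [Fin.val_last]; omega))
        simp only [hN, Matrix.of_apply, if_neg hi, Fin.val_zero]
        exact if_neg (by omega)
      rw [this, mul_zero, zero_mul]
    · intro hmem; exact absurd (Finset.mem_univ _) hmem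
  calc M.det = M.det * T.det := by rw [hdetT, mul_one]
    _ = (M * T).det := (Matrix.det_mul M T).symm
    _ = a (n - 1) := by rw [hMT]; exact hdetN
end

section
/- (Theorem on coefficients of P_n) Let s(x) = 1 + ∑_{i≥1} s_i x^i and define P_0 = 1, P_k(x) = ⌊P_{k−1}(x)·s(x)⌋_k. Then P_n(x) = ∑_{k=0}^n x^k · ∑_{ν ∈ P_k} ((n+1−k)/(n+1−∑_j ν_j)) · C(n; ν) · s^ν, where P_k is the set of partitions ν = (1^{ν_1}·2^{ν_2}·...) of k, s^ν = ∏_j s_j^{ν_j}, and C(n; ν) = n!/((∏_j ν_j!)(n−∑_j ν_j)!). -/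
open PowerSeries

/-- `P₀ = 1`, `Pₖ = ⌊P_{k−1}·s⌋ₖ`. -/
noncomputable def truncSeq {R : Type*} [CommRing R] (s : PowerSeries R) : ℕ → Polynomial R
  | 0 => 1
  | k + 1 => PowerSeries.trunc (k + 2) ((truncSeq s k : PowerSeries R) * s)

namespace Stmt7Aux

open Finset

/-- rational weight in "b-form" -/
def bc (n : ℕ) (m : Multiset ℕ) : ℚ :=
  (((n + 1 - m.sum) * n.factorial : ℕ) : ℚ) /
    ((∏ j ∈ m.toFinset, ((m.count j).factorial : ℚ)) *
      (((n + 1 - Multiset.card m).factorial : ℕ) : ℚ))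

lemma card_le_sum_of_pos {m : Multiset ℕ} (h : ∀ i ∈ m, 0 < i) :
    Multiset.card m ≤ m.sum := by
  induction m using Multiset.induction with
  | empty => simp
  | cons a t ih =>
    have h1 := h a (Multiset.mem_cons_self a t)
    have h2 := ih fun i hi => h i (Multiset.mem_cons_of_mem hi)
    simp only [Multiset.card_cons, Multiset.sum_cons]
    omega

lemma sum_eq_sum_count (m : Multiset ℕ) :
    m.sum = ∑ a ∈ m.toFinset, m.count a * a := by
  conv_lhs => rw [show m = m.map id from (Multiset.map_id m).symm]
  rw [Finset.sum_multiset_map_count]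
  simp [smul_eq_mul]

lemma prodD_ne_zero (m : Multiset ℕ) :
    (∏ j ∈ m.toFinset, ((m.count j).factorial : ℚ)) ≠ 0 := by
  apply Finset.prod_ne_zero_iff.2
  intro i _
  exact_mod_cast (Nat.factorial_pos _).ne'

lemma prod_count_erase (m : Multiset ℕ) {j : ℕ} (hj : j ∈ m) :
    (∏ i ∈ m.toFinset, (m.count i).factorial) =
      m.count j * ∏ i ∈ (m.erase j).toFinset, ((m.erase j).count i).factorial := by
  have hsub : (m.erase j).toFinset ⊆ m.toFinset := by
    intro x hx
    rw [Multiset.mem_toFinset] at hx ⊢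
    exact Multiset.mem_of_mem_erase hx
  have h1 : (∏ i ∈ (m.erase j).toFinset, ((m.erase j).count i).factorial)
      = ∏ i ∈ m.toFinset, ((m.erase j).count i).factorial := by
    apply Finset.prod_subset hsub
    intro x _ hnx
    rw [Multiset.mem_toFinset] at hnx
    rw [Multiset.count_eq_zero_of_notMem hnx, Nat.factorial_zero]
  have hjf : j ∈ m.toFinset := Multiset.mem_toFinset.2 hj
  rw [h1, ← Finset.mul_prod_erase _ _ hjf, ← Finset.mul_prod_erase _ (fun i => ((m.erase j).count i).factorial) hjf]
  have hcount : 1 ≤ m.count j := Multiset.one_le_count_iff_mem.2 hj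
  have hque : ∀ i ∈ m.toFinset.erase j, ((m.erase j).count i).factorial = (m.count i).factorial := by
    intro i hi
    rw [Multiset.count_erase_of_ne (Finset.ne_of_mem_erase hi) m]
  rw [Finset.prod_congr rfl hque, Multiset.count_erase_self, ← mul_assoc]
  congr 1
  obtain ⟨c, hc⟩ : ∃ c, m.count j = c + 1 := ⟨_, (Nat.succ_pred_eq_of_pos hcount).symm⟩
  rw [hc, Nat.factorial_succ]
  simp

/-- The key rational identity: removing each distinct part from a partition. -/
lemma bc_rec {m : Multiset ℕ} (hpos : ∀ i ∈ m, 0 < i) {n : ℕ} (hk : m.sum ≤ n + 1) :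
    bc (n + 1) m = bc n m + ∑ j ∈ m.toFinset, bc n (m.erase j) := by
  set k := m.sum with hkdef
  set l := Multiset.card m with hldef
  have hlk : l ≤ k := card_le_sum_of_pos hpos
  have hln : l ≤ n + 1 := hlk.trans hk
  set D : ℚ := ∏ j ∈ m.toFinset, ((m.count j).factorial : ℚ) with hD
  have hDne : D ≠ 0 := prodD_ne_zero m
  -- rewrite each erased term
  have herase : ∀ j ∈ m.toFinset, bc n (m.erase j) =
      ((m.count j : ℚ) * (((n : ℚ) + 1 - k + j) * (n.factorial : ℚ))) /
        (D * (((n + 2 - l).factorial : ℕ) : ℚ)) := by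
    intro j hjf
    have hj : j ∈ m := Multiset.mem_toFinset.1 hjf
    have hj1 : 1 ≤ j := hpos j hj
    have hjk : j ≤ k := Multiset.single_le_sum (fun x _ => Nat.zero_le x) _ hj
    have hl1 : 1 ≤ l := by
      rw [hldef]
      exact Multiset.card_pos_iff_exists_mem.2 ⟨j, hj⟩
    have hcard : Multiset.card (m.erase j) = l - 1 := by
      rw [hldef, Multiset.card_erase_of_mem hj, Nat.pred_eq_sub_one]
    have hsum : (m.erase j).sum = k - j := by
      have h2 := congrArg Multiset.sum (Multiset.cons_erase hj)
      rw [Multiset.sum_cons] at h2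
      omega
    have hDerQ : D = (∏ i ∈ (m.erase j).toFinset, (((m.erase j).count i).factorial : ℚ))
        * (m.count j : ℚ) := by
      have hq := congrArg (Nat.cast : ℕ → ℚ) (prod_count_erase m hj)
      push_cast at hq
      rw [hD, hq]
      ring
    have hfne : (((n + 2 - l).factorial : ℕ) : ℚ) ≠ 0 := by
      exact_mod_cast (Nat.factorial_pos _).ne'
    have h1 : n + 1 - (l - 1) = n + 2 - l := by omega
    have h2 : ((n + 1 - (k - j)) : ℕ) = n + 1 - k + j := by omega
    rw [bc, hsum, hcard, h1, h2,
      div_eq_div_iff (mul_ne_zero (prodD_ne_zero _) hfne) (mul_ne_zero hDne hfne), hDerQ]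
    push_cast [Nat.cast_sub hk]
    ring
  rw [Finset.sum_congr rfl herase]
  -- now compute the sum of numerators
  have hsumnum : ∑ j ∈ m.toFinset, ((m.count j : ℚ) * (((n : ℚ) + 1 - k + j) * (n.factorial : ℚ)))
      = ((l : ℚ) * ((n : ℚ) + 1 - k) + k) * (n.factorial : ℚ) := by
    have e1 : (∑ j ∈ m.toFinset, (m.count j : ℚ)) = (l : ℚ) := by
      rw [hldef]
      exact_mod_cast congrArg (Nat.cast : ℕ → ℚ) (Multiset.toFinset_sum_count_eq m)
    have e2 : (∑ j ∈ m.toFinset, ((m.count j : ℚ) * (j : ℚ))) = (k : ℚ) := by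
      rw [hkdef]
      have := sum_eq_sum_count m
      push_cast [this]
      rfl
    calc ∑ j ∈ m.toFinset, ((m.count j : ℚ) * (((n : ℚ) + 1 - k + j) * (n.factorial : ℚ)))
        = ∑ j ∈ m.toFinset, ((m.count j : ℚ) * ((n : ℚ) + 1 - k) * (n.factorial : ℚ)
            + (m.count j : ℚ) * (j : ℚ) * (n.factorial : ℚ)) := by
          refine Finset.sum_congr rfl fun j _ => by ring
      _ = ((l : ℚ) * ((n : ℚ) + 1 - k) + k) * (n.factorial : ℚ) := by
          rw [Finset.sum_add_distrib, ← Finset.sum_mul, ← Finset.sum_mul, ← Finset.sum_mul,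
            e1, e2]
          ring
  rw [← Finset.sum_div, hsumnum]
  -- final identity
  set F1 : ℚ := (((n + 1 - l).factorial : ℕ) : ℚ) with hF1
  have hF1ne : F1 ≠ 0 := by
    rw [hF1]; exact_mod_cast (Nat.factorial_pos _).ne'
  have hc2 : ((n + 2 - l : ℕ) : ℚ) = (n : ℚ) + 2 - l := by
    push_cast [Nat.cast_sub (show l ≤ n + 2 by omega)]
    ring
  have hc2ne : (n : ℚ) + 2 - (l : ℚ) ≠ 0 := by
    have hcl : (l : ℚ) ≤ (n : ℚ) + 1 := by exact_mod_cast hln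
    intro h
    nlinarith [hcl]
  have hfact : (((n + 2 - l).factorial : ℕ) : ℚ) = ((n : ℚ) + 2 - l) * F1 := by
    have e : n + 2 - l = (n + 1 - l) + 1 := by omega
    rw [e, Nat.factorial_succ, hF1]
    push_cast [Nat.cast_sub hln]
    ring
  have eA : bc (n + 1) m
      = (((n : ℚ) + 2 - k) * (((n : ℚ) + 1) * (n.factorial : ℚ))) /
        (D * ((((n : ℚ) + 2 - l) * F1))) := by
    rw [bc, ← hD, ← hkdef, ← hldef]
    have e1 : n + 1 + 1 - k = n + 2 - k := by omega
    have e2 : n + 1 + 1 - l = n + 2 - l := by omega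
    rw [e1, e2, hfact]
    congr 1
    push_cast [Nat.cast_sub (show k ≤ n + 2 by omega), Nat.factorial_succ]
    ring
  have eB : bc n m = (((n : ℚ) + 1 - k) * (n.factorial : ℚ)) / (D * F1) := by
    rw [bc, ← hD, ← hkdef, ← hldef, ← hF1]
    congr 1
    push_cast [Nat.cast_sub hk]
    ring
  rw [eA, eB, hfact]
  rw [div_add_div _ _ (mul_ne_zero hDne hF1ne)
    (mul_ne_zero hDne (mul_ne_zero hc2ne hF1ne)),
    div_eq_div_iff (mul_ne_zero hDne (mul_ne_zero hc2ne hF1ne))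
      (mul_ne_zero (mul_ne_zero hDne hF1ne) (mul_ne_zero hDne (mul_ne_zero hc2ne hF1ne)))]
  ring


section Algebraic

variable {A : Type*} [CommRing A] [Algebra ℚ A]

/-- coefficient of `x^k` in `Pₙ`, in b-form -/
def cB (s : ℕ → A) (n k : ℕ) : A :=
  ∑ ν : Nat.Partition k, bc n ν.parts • (ν.parts.map s).prod

lemma cB_top (s : ℕ → A) (n : ℕ) : cB s n (n + 1) = 0 := by
  rw [cB]
  apply Finset.sum_eq_zero
  intro ν _
  have hb : bc n ν.parts = 0 := by
    rw [bc, ν.parts_sum]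
    simp
  rw [hb, zero_smul]

/-- the polynomial `Pₙ` in b-form -/
noncomputable def QB (s : ℕ → A) (n : ℕ) : Polynomial A :=
  ∑ k ∈ Finset.range (n + 1), Polynomial.monomial k (cB s n k)

lemma coeff_QB (s : ℕ → A) (n d : ℕ) (hd : d ≤ n + 1) : (QB s n).coeff d = cB s n d := by
  rw [QB, Polynomial.finset_sum_coeff]
  simp only [Polynomial.coeff_monomial]
  rw [Finset.sum_ite_eq' (Finset.range (n + 1)) d]
  by_cases h : d ≤ n
  · rw [if_pos (Finset.mem_range.2 (by omega))]
  · have hd1 : d = n + 1 := by omega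
    rw [if_neg (by simp only [Finset.mem_range]; omega), hd1, cB_top]

lemma coeff_QB_zero (s : ℕ → A) (n d : ℕ) (hd : n < d) : (QB s n).coeff d = 0 := by
  rw [QB, Polynomial.finset_sum_coeff]
  apply Finset.sum_eq_zero
  intro k hk
  rw [Finset.mem_range] at hk
  rw [Polynomial.coeff_monomial, if_neg (by omega)]

/-- add a part `j` to a partition of `k - j` -/
def consPart {k : ℕ} (x : Σ j : ℕ, Nat.Partition (k - j)) (hx : x.1 ∈ Finset.Icc 1 k) :
    Nat.Partition k where
  parts := x.1 ::ₘ x.2.parts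
  parts_pos := by
    intro i hi
    rcases Multiset.mem_cons.1 hi with h | h
    · subst h; exact (Finset.mem_Icc.1 hx).1
    · exact x.2.parts_pos h
  parts_sum := by
    rw [Multiset.sum_cons, x.2.parts_sum]
    have := (Finset.mem_Icc.1 hx).2
    omega

/-- remove a part `j` from a partition of `k` -/
def erasePart {k : ℕ} (ν : Nat.Partition k) (j : ℕ) (hj : j ∈ ν.parts) :
    Nat.Partition (k - j) where
  parts := ν.parts.erase j
  parts_pos := fun h => ν.parts_pos (Multiset.mem_of_mem_erase h)
  parts_sum := by
    have h2 := congrArg Multiset.sum (Multiset.cons_erase hj)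
    rw [Multiset.sum_cons, ν.parts_sum] at h2
    omega

lemma sum_pairs (s : ℕ → A) (n k : ℕ) :
    ∑ j ∈ Finset.Icc 1 k, cB s n (k - j) * s j
      = ∑ ν : Nat.Partition k,
          (∑ j ∈ ν.parts.toFinset, bc n (ν.parts.erase j)) • (ν.parts.map s).prod := by
  have lhs_eq : ∑ j ∈ Finset.Icc 1 k, cB s n (k - j) * s j
      = ∑ x ∈ (Finset.Icc 1 k).sigma
            (fun j => (Finset.univ : Finset (Nat.Partition (k - j)))),
          bc n x.2.parts • (s x.1 * (x.2.parts.map s).prod) := by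
    rw [Finset.sum_sigma]
    refine Finset.sum_congr rfl fun j hj => ?_
    rw [cB, Finset.sum_mul]
    refine Finset.sum_congr rfl fun μ _ => ?_
    rw [smul_mul_assoc, mul_comm ((μ.parts.map s).prod) (s j)]
  have rhs_eq : (∑ ν : Nat.Partition k,
        (∑ j ∈ ν.parts.toFinset, bc n (ν.parts.erase j)) • (ν.parts.map s).prod)
      = ∑ x ∈ (Finset.univ : Finset (Nat.Partition k)).sigma (fun ν => ν.parts.toFinset),
          bc n (x.1.parts.erase x.2) • (x.1.parts.map s).prod := by
    rw [Finset.sum_sigma]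
    refine Finset.sum_congr rfl fun ν _ => ?_
    rw [Finset.sum_smul]
  rw [lhs_eq, rhs_eq]
  refine Finset.sum_bij' (fun x hx => ⟨consPart x (Finset.mem_sigma.1 hx).1, x.1⟩)
    (fun y hy => ⟨y.2, erasePart y.1 y.2
      (Multiset.mem_toFinset.1 (Finset.mem_sigma.1 hy).2)⟩) ?_ ?_ ?_ ?_ ?_
  · intro x hx
    rw [Finset.mem_sigma]
    exact ⟨Finset.mem_univ _, Multiset.mem_toFinset.2 (Multiset.mem_cons_self _ _)⟩
  · intro y hy
    rw [Finset.mem_sigma]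
    have hmem : y.2 ∈ y.1.parts := Multiset.mem_toFinset.1 (Finset.mem_sigma.1 hy).2
    refine ⟨Finset.mem_Icc.2 ⟨y.1.parts_pos hmem, ?_⟩, Finset.mem_univ _⟩
    have := Multiset.single_le_sum (fun x _ => Nat.zero_le x) _ hmem
    rw [y.1.parts_sum] at this
    exact this
  · rintro ⟨j, μ⟩ hx
    refine Sigma.ext rfl (heq_of_eq ?_)
    apply Nat.Partition.ext
    show (j ::ₘ μ.parts).erase j = μ.parts
    exact Multiset.erase_cons_head j μ.parts
  · rintro ⟨ν, j⟩ hy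
    have hmem : j ∈ ν.parts := Multiset.mem_toFinset.1 (Finset.mem_sigma.1 hy).2
    have hparts : ∀ h, consPart (⟨j, erasePart ν j hmem⟩ : Σ j : ℕ, Nat.Partition (k - j)) h
        = ν := by
      intro h
      apply Nat.Partition.ext
      show j ::ₘ ν.parts.erase j = ν.parts
      exact Multiset.cons_erase hmem
    refine Sigma.ext (hparts ?_) (HEq.refl j)
    simp only [Finset.mem_Icc]
    have := Multiset.single_le_sum (fun x _ => Nat.zero_le x) _ hmem
    rw [ν.parts_sum] at this
    exact ⟨ν.parts_pos hmem, this⟩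
  · rintro ⟨j, μ⟩ hx
    show bc n μ.parts • (s j * (μ.parts.map s).prod)
        = bc n ((j ::ₘ μ.parts).erase j) • ((j ::ₘ μ.parts).map s).prod
    rw [Multiset.erase_cons_head, Multiset.map_cons, Multiset.prod_cons]

lemma cB_rec (s : ℕ → A) (n k : ℕ) (hk : k ≤ n + 1) :
    cB s (n + 1) k = cB s n k + ∑ j ∈ Finset.Icc 1 k, cB s n (k - j) * s j := by
  rw [sum_pairs, cB, cB, ← Finset.sum_add_distrib]
  refine Finset.sum_congr rfl fun ν _ => ?_
  rw [← add_smul]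
  congr 1
  exact bc_rec (fun i hi => ν.parts_pos hi) (by rw [ν.parts_sum]; exact hk)

lemma main_core (s : ℕ → A) (n : ℕ) :
    truncSeq (PowerSeries.mk fun j => if j = 0 then (1 : A) else s j) n = QB s n := by
  induction n with
  | zero =>
    show (1 : Polynomial A) = QB s 0
    rw [QB]
    rw [Finset.sum_range_one]
    rw [cB]
    rw [Finset.sum_eq_single_of_mem default (Finset.mem_univ _)
      (fun b _ hb => absurd (Subsingleton.elim b default) hb)]
    have hparts : (default : Nat.Partition 0).parts = 0 :=
      Nat.Partition.partition_zero_parts _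
    rw [hparts]
    have hbc : bc 0 (0 : Multiset ℕ) = 1 := by
      rw [bc]
      simp
    rw [hbc]
    simp
  | succ n ih =>
    show PowerSeries.trunc (n + 2)
        ((truncSeq (PowerSeries.mk fun j => if j = 0 then (1 : A) else s j) n : PowerSeries A)
          * (PowerSeries.mk fun j => if j = 0 then (1 : A) else s j)) = QB s (n + 1)
    rw [ih]
    apply Polynomial.ext
    intro d
    rw [PowerSeries.coeff_trunc]
    by_cases hd : d < n + 2
    · rw [if_pos hd, coeff_QB s (n + 1) d (by omega), cB_rec s n d (by omega)]
      rw [PowerSeries.coeff_mul]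
      rw [Finset.Nat.sum_antidiagonal_eq_sum_range_succ_mk]
      simp only [Polynomial.coeff_coe, PowerSeries.coeff_mk]
      rw [Finset.sum_range_succ]
      rw [Nat.sub_self]
      rw [if_pos rfl, mul_one, coeff_QB s n d (by omega)]
      rw [add_comm]
      congr 1
      refine Finset.sum_nbij' (fun i => d - i) (fun j => d - j) ?_ ?_ ?_ ?_ ?_
      · intro i hi
        simp only [Finset.mem_range] at hi
        simp only [Finset.mem_Icc]
        omega
      · intro j hj
        simp only [Finset.mem_Icc] at hj
        simp only [Finset.mem_range]
        omega
      · intro i hi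
        simp only [Finset.mem_range] at hi
        omega
      · intro j hj
        simp only [Finset.mem_Icc] at hj
        omega
      · intro i hi
        simp only [Finset.mem_range] at hi
        have h1 : d - i ≠ 0 := by omega
        rw [if_neg h1, coeff_QB s n i (by omega)]
        have h2 : d - (d - i) = i := by omega
        rw [h2]
    · rw [if_neg hd, coeff_QB_zero s (n + 1) d (by omega)]

lemma aform {n k : ℕ} (hk : k ≤ n) (ν : Nat.Partition k) :
    (((n + 1 - k : ℕ) : ℚ) / ((n + 1 - ν.parts.card : ℕ) : ℚ)) *
      ((n.factorial : ℚ) /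
        ((∏ j ∈ ν.parts.toFinset, ((ν.parts.count j).factorial : ℚ)) *
          ((n - ν.parts.card).factorial : ℚ))) = bc n ν.parts := by
  set l := ν.parts.card with hl
  have hlk : l ≤ k := by
    have h := card_le_sum_of_pos fun i hi => ν.parts_pos hi
    rw [ν.parts_sum] at h
    exact h
  have hln : l ≤ n := hlk.trans hk
  set D := ∏ j ∈ ν.parts.toFinset, ((ν.parts.count j).factorial : ℚ) with hD
  have hDne : D ≠ 0 := prodD_ne_zero ν.parts
  have hfact : (((n + 1 - l).factorial : ℕ) : ℚ)
      = ((n + 1 - l : ℕ) : ℚ) * (((n - l).factorial : ℕ) : ℚ) := by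
    have e : n + 1 - l = (n - l) + 1 := by omega
    rw [e, Nat.factorial_succ]
    push_cast
    ring
  rw [bc, ν.parts_sum, ← hl, ← hD, hfact, Nat.cast_mul]
  have h1 : ((n + 1 - l : ℕ) : ℚ) ≠ 0 := by
    have : 0 < n + 1 - l := by omega
    exact_mod_cast this.ne'
  have h2 : (((n - l).factorial : ℕ) : ℚ) ≠ 0 := by
    exact_mod_cast (Nat.factorial_pos _).ne'
  field_simp

end Algebraic

end Stmt7Aux


/-- for `s(x) = 1 + ∑ sᵢxⁱ` over a `ℚ`-algebra,
`Pₙ(x) = ∑_{k=0}^n x^k ∑_{ν ⊢ k} ((n+1−k)/(n+1−∑νⱼ))·C(n;ν)·s^ν` where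
`C(n;ν) = n!/((∏νⱼ!)(n−∑νⱼ)!)` and `s^ν = ∏ sⱼ^{νⱼ}`. -/
theorem stmt7 {A : Type*} [CommRing A] [Algebra ℚ A] (s : ℕ → A) (n : ℕ) :
    truncSeq (PowerSeries.mk fun j => if j = 0 then 1 else s j) n =
    ∑ k ∈ Finset.range (n + 1), (Polynomial.X : Polynomial A) ^ k *
      ∑ ν : Nat.Partition k,
        ((((n + 1 - k : ℕ) : ℚ) / ((n + 1 - ν.parts.card : ℕ) : ℚ)) *
          ((n.factorial : ℚ) /
            ((∏ j ∈ ν.parts.toFinset, ((ν.parts.count j).factorial : ℚ)) *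
              ((n - ν.parts.card).factorial : ℚ)))) •
          Polynomial.C (ν.parts.map s).prod := by
  rw [Stmt7Aux.main_core, Stmt7Aux.QB]
  refine Finset.sum_congr rfl fun k hk => ?_
  rw [Finset.mem_range] at hk
  have hk' : k ≤ n := by omega
  calc Polynomial.monomial k (Stmt7Aux.cB s n k)
      = Polynomial.C (Stmt7Aux.cB s n k) * Polynomial.X ^ k :=
        (Polynomial.C_mul_X_pow_eq_monomial).symm
    _ = _ := by
        rw [mul_comm, Stmt7Aux.cB, map_sum]
        congr 1
        refine Finset.sum_congr rfl fun ν _ => ?_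
        rw [← Stmt7Aux.aform hk' ν, Polynomial.smul_C]
end

section
/- (Main theorem) Let s(x) = 1 + ∑ s_i x^i, define P_0 = 1, P_k(x) = ⌊P_{k−1}(x) s(x)⌋_k, and set Q_n(x) = x^n P_n(1/x) (the reversed polynomial of P_n). Then the generating series satisfies ∑_{n≥0} Q_n(x) t^n = (∑_{n≥0} Q_n(0) t^n)/(1 − t x ∑_{n≥0} Q_n(0) t^n) in the ring of formal power series in t over the polynomial ring in x. -/
open PowerSeries

namespace Stmt8Aux

open Polynomial Finset

variable {R : Type*} [CommRing R]

lemma truncSeq_zero (S : PowerSeries R) : truncSeq S 0 = 1 := rfl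

lemma truncSeq_coeff_eq_zero (S : PowerSeries R) : ∀ n m : ℕ, n < m → (truncSeq S n).coeff m = 0
  | 0, m, h => by
    rw [truncSeq_zero, Polynomial.coeff_one, if_neg (by omega)]
  | k + 1, m, h => by
    rw [truncSeq, PowerSeries.coeff_trunc, if_neg (by omega)]

lemma truncSeq_coeff_rec (S : PowerSeries R) (k m : ℕ) (h : m ≤ k + 1) :
    (truncSeq S (k + 1)).coeff m
      = ∑ i ∈ range (m + 1), (truncSeq S k).coeff i * PowerSeries.coeff (m - i) S := by
  rw [truncSeq, PowerSeries.coeff_trunc, if_pos (by omega), PowerSeries.coeff_mul,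
    Finset.Nat.sum_antidiagonal_eq_sum_range_succ_mk]
  simp [Polynomial.coeff_coe]

lemma key (S : PowerSeries R) (hS0 : PowerSeries.coeff 0 S = 1) :
    ∀ n b : ℕ, b ≤ n → (truncSeq S n).coeff b
      = ∑ i ∈ range (b + 1), (truncSeq S i).coeff i * (truncSeq S (n - 1 - i)).coeff (b - i) := by
  intro n
  induction n with
  | zero =>
    intro b hb
    interval_cases b
    simp [truncSeq_zero]
  | succ k ih =>
    intro b hb
    rcases eq_or_lt_of_le hb with rfl | hbk
    · rw [Finset.sum_range_succ, Finset.sum_eq_zero, zero_add]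
      · have h0 : k + 1 - 1 - (k + 1) = 0 := by omega
        rw [h0, Nat.sub_self, truncSeq_zero]
        simp
      · intro i hi
        simp only [mem_range] at hi
        rw [truncSeq_coeff_eq_zero S (k + 1 - 1 - i) (k + 1 - i) (by omega), mul_zero]
    · have hbk' : b ≤ k := by omega
      rw [truncSeq_coeff_rec S k b (by omega)]
      have step1 : ∑ m ∈ range (b + 1), (truncSeq S k).coeff m * PowerSeries.coeff (b - m) S
          = ∑ m ∈ range (b + 1), ∑ i ∈ range (m + 1),
              (truncSeq S i).coeff i * (truncSeq S (k - 1 - i)).coeff (m - i)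
                * PowerSeries.coeff (b - m) S := by
        refine Finset.sum_congr rfl fun m hm => ?_
        rw [ih m (by simp only [mem_range] at hm; omega), Finset.sum_mul]
      rw [step1]
      have swap := (Finset.sum_Ico_Ico_comm 0 (b + 1) (fun i m =>
          (truncSeq S i).coeff i * (truncSeq S (k - 1 - i)).coeff (m - i)
            * PowerSeries.coeff (b - m) S)).symm
      simp only [Nat.Ico_zero_eq_range] at swap
      rw [swap]
      refine Finset.sum_congr rfl fun i hi => ?_
      simp only [mem_range] at hi
      have hib : i ≤ b := by omega
      rw [Finset.sum_Ico_eq_sum_range]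
      rcases Nat.lt_or_ge i k with hik | hik
      · have h2 : k + 1 - 1 - i = (k - 1 - i) + 1 := by omega
        have h3 : b + 1 - i = (b - i) + 1 := by omega
        rw [h2, h3, truncSeq_coeff_rec S (k - 1 - i) (b - i) (by omega), Finset.mul_sum]
        refine Finset.sum_congr rfl fun m hm => ?_
        rw [Nat.add_sub_cancel_left, Nat.sub_add_eq, mul_assoc]
      · have h1 : b + 1 - i = 1 := by omega
        rw [h1, Finset.sum_range_one]
        simp only [add_zero, Nat.sub_self]
        have e1 : k - 1 - i = 0 := by omega
        have e2 : k + 1 - 1 - i = 0 := by omega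
        have e5 : b - i = 0 := by omega
        rw [e1, e2, e5, truncSeq_zero]
        simp [hS0]


lemma Qrec (S : PowerSeries R) (hS0 : PowerSeries.coeff 0 S = 1) (n : ℕ) :
    reflect (n + 1) (truncSeq S (n + 1))
      = Polynomial.C ((truncSeq S (n + 1)).coeff (n + 1))
        + Polynomial.X * ∑ i ∈ range (n + 1),
            Polynomial.C ((truncSeq S i).coeff i) * reflect (n - i) (truncSeq S (n - i)) := by
  ext j
  rw [Polynomial.coeff_add, coeff_reflect]
  cases j with
  | zero =>
    rw [revAt_le (by omega)]
    simp
  | succ j' =>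
    rw [Polynomial.coeff_X_mul, Polynomial.coeff_C, if_neg (Nat.succ_ne_zero j'), zero_add,
      Polynomial.finset_sum_coeff]
    simp only [Polynomial.coeff_C_mul, coeff_reflect]
    rcases le_or_gt (j' + 1) (n + 1) with hj | hj
    · rw [revAt_le hj]
      have hb : n + 1 - (j' + 1) = n - j' := by omega
      rw [hb, key S hS0 (n + 1) (n - j') (by omega)]
      symm
      calc ∑ i ∈ range (n + 1),
              (truncSeq S i).coeff i * (truncSeq S (n - i)).coeff (revAt (n - i) j')
          = ∑ i ∈ range (n - j' + 1),
              (truncSeq S i).coeff i * (truncSeq S (n - i)).coeff (revAt (n - i) j') := by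
            refine (Finset.sum_subset (Finset.range_subset_range.mpr (by omega)) ?_).symm
            intro i hi hni
            simp only [mem_range] at hi hni
            rw [revAt_eq_self_of_lt (by omega),
              truncSeq_coeff_eq_zero S (n - i) j' (by omega), mul_zero]
        _ = ∑ i ∈ range (n - j' + 1),
              (truncSeq S i).coeff i * (truncSeq S (n + 1 - 1 - i)).coeff (n - j' - i) := by
            refine Finset.sum_congr rfl fun i hi => ?_
            simp only [mem_range] at hi
            rw [revAt_le (by omega)]
            have e1 : n + 1 - 1 - i = n - i := by omega
            have e2 : n - j' - i = n - i - j' := by omega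
            rw [e1, e2]
    · rw [revAt_eq_self_of_lt (by omega),
        truncSeq_coeff_eq_zero S (n + 1) (j' + 1) (by omega)]
      symm
      refine Finset.sum_eq_zero fun i hi => ?_
      simp only [mem_range] at hi
      rw [revAt_eq_self_of_lt (by omega),
        truncSeq_coeff_eq_zero S (n - i) j' (by omega), mul_zero]

end Stmt8Aux

open Stmt8Aux Polynomial Finset in
/-- Main theorem: with `Qₙ(x) = xⁿ·Pₙ(1/x)` (the reversal of `Pₙ` at degree
`n`, so `Qₙ(0)` is the coefficient of `xⁿ` in `Pₙ`), the generating series satisfies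
`∑ Qₙ(x) tⁿ = (∑ Qₙ(0) tⁿ)/(1 − t·x·∑ Qₙ(0) tⁿ)` in `(R[x])[[t]]`. -/
theorem stmt8 {R : Type*} [CommRing R] (s : ℕ → R) :
    let S : PowerSeries R := PowerSeries.mk fun j => if j = 0 then 1 else s j
    let Q : ℕ → Polynomial R := fun n => Polynomial.reflect n (truncSeq S n)
    let G0 : PowerSeries (Polynomial R) :=
      PowerSeries.mk fun n => Polynomial.C ((truncSeq S n).coeff n)
    PowerSeries.mk (fun n => Q n) =
      G0 * PowerSeries.invOfUnit
        (1 - PowerSeries.X * PowerSeries.C (Polynomial.X : Polynomial R) * G0) 1 := by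
  intro S Q G0
  have hS0 : PowerSeries.coeff 0 S = 1 := by simp [S]
  set u : PowerSeries (Polynomial R) :=
    1 - PowerSeries.X * PowerSeries.C (Polynomial.X : Polynomial R) * G0 with hu
  have hconst : constantCoeff u = ((1 : (Polynomial R)ˣ) : Polynomial R) := by
    simp [hu]
  have hmain : PowerSeries.mk (fun n => Q n) * u = G0 := by
    have hexp : PowerSeries.mk (fun n => Q n) * u
        = PowerSeries.mk (fun n => Q n)
          - PowerSeries.X * (PowerSeries.C (Polynomial.X : Polynomial R)
              * (G0 * PowerSeries.mk (fun n => Q n))) := by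
      rw [hu]; ring
    rw [hexp]
    refine PowerSeries.ext fun n => ?_
    rw [map_sub]
    cases n with
    | zero =>
      rw [PowerSeries.coeff_zero_X_mul]
      simp [Q, G0, truncSeq_zero]
    | succ n =>
      rw [PowerSeries.coeff_succ_X_mul, PowerSeries.coeff_C_mul, PowerSeries.coeff_mul,
        Finset.Nat.sum_antidiagonal_eq_sum_range_succ_mk]
      simp only [PowerSeries.coeff_mk, Q, G0]
      rw [Qrec S hS0 n]
      ring
  calc PowerSeries.mk (fun n => Q n)
      = PowerSeries.mk (fun n => Q n) * (u * PowerSeries.invOfUnit u 1) := by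
        rw [PowerSeries.mul_invOfUnit u 1 hconst, mul_one]
    _ = (PowerSeries.mk (fun n => Q n) * u) * PowerSeries.invOfUnit u 1 := by ring
    _ = G0 * PowerSeries.invOfUnit u 1 := by rw [hmain]
end

section
/- With Q_n as in the main theorem (Q_n(x) = x^n P_n(1/x) for the truncation-recursion polynomials P_n associated to s(x) = 1 + ∑ s_i x^i), the sequence (Q_0(x), Q_1(x), ...) equals I^{−x}(Q(0)), the (−x)-interpolated invert transform of the sequence (Q_0(0), Q_1(0), ...). Equivalently I^x(Q(0)) = Q(−x). -/
open PowerSeries Finset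

namespace Stmt9Aux

variable {R : Type*} [CommRing R] (s : ℕ → R)

noncomputable def Sser : PowerSeries R := PowerSeries.mk fun j => if j = 0 then 1 else s j

noncomputable def Bser : PowerSeries R := PowerSeries.mk fun n => (truncSeq (Sser s) n).coeff n

noncomputable def wser : PowerSeries R := X * Bser s

lemma coeff_wser_succ (n : ℕ) :
    coeff (n + 1) (wser s) = (truncSeq (Sser s) n).coeff n := by
  simp [wser, coeff_succ_X_mul, Bser]

lemma coeff_wser_zero : coeff 0 (wser s) = 0 := by simp [wser]

lemma coeff_X_pow_mul'' (g : PowerSeries R) (k N : ℕ) :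
    coeff (N + k) (X ^ k * g) = coeff N g := by
  induction k with
  | zero => simp
  | succ k ih =>
    rw [show N + (k + 1) = (N + k) + 1 from rfl, pow_succ, mul_comm (X ^ k) X, mul_assoc,
      coeff_succ_X_mul, ih]

lemma coeff_X_pow_mul_zero (g : PowerSeries R) (N : ℕ) :
    coeff N (X ^ (N + 1) * g) = 0 := by
  induction N generalizing g with
  | zero => simp [coeff_zero_X_mul]
  | succ N ih =>
    rw [show N + 1 + 1 = (N + 1) + 1 from rfl, pow_succ, mul_comm (X ^ (N+1)) X, mul_assoc,
      coeff_succ_X_mul]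
    exact ih g

lemma wser_pow (j : ℕ) : wser s ^ j = X ^ j * Bser s ^ j := mul_pow _ _ _

lemma coeff_wpow_shift (j N : ℕ) (f : PowerSeries R) :
    coeff (N + j) (wser s ^ j * f) = coeff N (Bser s ^ j * f) := by
  rw [wser_pow, mul_assoc, coeff_X_pow_mul'']

lemma coeff_wpow_zero {N k : ℕ} (h : N < k) : coeff N (wser s ^ k) = 0 := by
  obtain ⟨d, rfl⟩ : ∃ d, k = (N + 1) + d := ⟨k - (N+1), by omega⟩
  rw [wser_pow, pow_add, mul_assoc, coeff_X_pow_mul_zero]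

lemma truncSeq_coeff_high {n k : ℕ} (h : n < k) : (truncSeq (Sser s) n).coeff k = 0 := by
  cases n with
  | zero => simp [truncSeq, Polynomial.coeff_one]; omega
  | succ n =>
    rw [truncSeq, PowerSeries.coeff_trunc, if_neg (by omega)]

lemma wpow_succ (j : ℕ) : wser s ^ (j + 1) = X * (Bser s * wser s ^ j) := by
  rw [pow_succ, wser]; ring


lemma sum_antidiagonal_snd {M : Type*} [AddCommMonoid M] (n : ℕ) (g : ℕ → M) :
    ∑ p ∈ antidiagonal n, g p.2 = ∑ c ∈ range (n + 1), g c := by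
  rw [Finset.Nat.sum_antidiagonal_eq_sum_range_succ (fun i j => g j)]
  exact Finset.sum_range_reflect g (n + 1)

lemma Wlem (n : ℕ)
    (IH : ∀ n' ≤ n, ∀ m j, m + j = n' + 1 →
      (truncSeq (Sser s) n').coeff m = coeff (n' + 1) (wser s ^ j)) :
    ∀ d ≤ n + 1, ∀ M, d ≤ M →
      coeff (d + 1) (wser s)
        = ∑ c ∈ range (M + 1), coeff c (Sser s) * coeff d (wser s ^ c) := by
  intro d hd M hM
  rw [coeff_wser_succ]
  have hsub : ∑ c ∈ range (M + 1), coeff c (Sser s) * coeff d (wser s ^ c)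
      = ∑ c ∈ range (d + 1), coeff c (Sser s) * coeff d (wser s ^ c) := by
    refine (Finset.sum_subset (by intro x hx; simp_all; omega) ?_).symm
    intro c hc hc'
    rw [coeff_wpow_zero s (by simp_all), mul_zero]
  rw [hsub]
  cases d with
  | zero =>
    simp [truncSeq, Sser]
  | succ N =>
    rw [truncSeq, PowerSeries.coeff_trunc, if_pos (by omega), PowerSeries.coeff_mul]
    have : ∀ p ∈ antidiagonal (N + 1),
        (coeff p.1) ↑(truncSeq (Sser s) N) * (coeff p.2) (Sser s)
          = coeff p.2 (Sser s) * coeff (N + 1) (wser s ^ p.2) := by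
      intro p hp
      rw [Polynomial.coeff_coe, IH N (by omega) p.1 p.2 (mem_antidiagonal.mp hp), mul_comm]
    rw [Finset.sum_congr rfl this,
      sum_antidiagonal_snd (N + 1) (fun c => coeff c (Sser s) * coeff (N + 1) (wser s ^ c))]

lemma keyL : ∀ n m j, m + j = n + 1 →
    (truncSeq (Sser s) n).coeff m = coeff (n + 1) (wser s ^ j) := by
  intro n
  induction n using Nat.strong_induction_on with
  | _ n IH =>
    match n with
    | 0 =>
      intro m j h
      have hc : (m = 0 ∧ j = 1) ∨ (m = 1 ∧ j = 0) := by omega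
      rcases hc with ⟨rfl, rfl⟩ | ⟨rfl, rfl⟩
      · simp [truncSeq, pow_one, coeff_wser_succ]
      · simp [truncSeq, PowerSeries.coeff_one, Polynomial.coeff_one]
    | Nat.succ n =>
      intro m j h
      have IH' : ∀ n' ≤ n, ∀ m j, m + j = n' + 1 →
          (truncSeq (Sser s) n').coeff m = coeff (n' + 1) (wser s ^ j) :=
        fun n' hn' => IH n' (by omega)
      match j, h with
      | 0, h =>
        rw [truncSeq_coeff_high s (by omega), pow_zero, PowerSeries.coeff_one,
          if_neg (by omega)]
      | (k+1), h =>
        have hm : m + k = n + 1 := by omega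
        -- LHS
        rw [truncSeq, PowerSeries.coeff_trunc, if_pos (by omega), PowerSeries.coeff_mul]
        have step1 : ∀ p ∈ antidiagonal m,
            (coeff p.1) ↑(truncSeq (Sser s) n) * (coeff p.2) (Sser s)
              = coeff p.2 (Sser s) * coeff m (Bser s ^ k * wser s ^ p.2) := by
          intro p hp
          have hp' := mem_antidiagonal.mp hp
          rw [Polynomial.coeff_coe, IH' n le_rfl p.1 (p.2 + k) (by omega), mul_comm,
            pow_add, mul_comm (wser s ^ p.2) (wser s ^ k),
            show n + 1 = m + k by omega, coeff_wpow_shift]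
        rw [Finset.sum_congr rfl step1,
          sum_antidiagonal_snd m (fun c => coeff c (Sser s) * coeff m (Bser s ^ k * wser s ^ c))]
        -- RHS
        rw [show n + 1 + 1 = (m + 1) + k by omega, pow_succ, coeff_wpow_shift,
          PowerSeries.coeff_mul, Finset.Nat.sum_antidiagonal_succ']
        rw [coeff_wser_zero, mul_zero, zero_add]
        have hw : ∀ p ∈ antidiagonal m,
            (coeff p.1) (Bser s ^ k) * coeff (p.2 + 1) (wser s)
              = ∑ c ∈ range (m + 1),
                  coeff c (Sser s) * ((coeff p.1) (Bser s ^ k) * coeff p.2 (wser s ^ c)) := by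
          intro p hp
          have hp' := mem_antidiagonal.mp hp
          rw [Wlem s n IH' p.2 (by omega) m (by omega), Finset.mul_sum]
          exact Finset.sum_congr rfl fun c _ => by ring
        rw [Finset.sum_congr rfl hw, Finset.sum_comm]
        refine Finset.sum_congr rfl fun c _ => ?_
        rw [PowerSeries.coeff_mul, Finset.mul_sum]

lemma coeff_wser_succ' (n : ℕ) : coeff (n + 1) (wser s) = coeff n (Bser s) := by
  unfold wser; rw [coeff_succ_X_mul]

lemma coeff_wser_zero' : coeff 0 (wser s) = 0 := by
  unfold wser; exact coeff_zero_X_mul _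

lemma Q_eq (n : ℕ) : Polynomial.reflect n (truncSeq (Sser s) n)
    = ∑ j ∈ range (n + 1),
        Polynomial.C (coeff (n + 1) (wser s ^ (j + 1))) * Polynomial.X ^ j := by
  ext k
  rw [Polynomial.coeff_reflect, Polynomial.finset_sum_coeff]
  simp only [Polynomial.coeff_C_mul, Polynomial.coeff_X_pow, mul_ite, mul_one, mul_zero]
  by_cases hk : k ≤ n
  · rw [Polynomial.revAt_le hk, keyL s n (n - k) (k + 1) (by omega),
      Finset.sum_ite_eq, if_pos (mem_range.mpr (by omega))]
  · have h1 : Polynomial.revAt n k = k := by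
      exact if_neg hk
    rw [h1, truncSeq_coeff_high s (by omega)]
    symm
    refine Finset.sum_eq_zero fun j hj => ?_
    rw [if_neg (by simp at hj; omega)]

lemma Qcomp (n : ℕ) : (Polynomial.reflect n (truncSeq (Sser s) n)).comp (-Polynomial.X)
    = ∑ j ∈ range (n + 1),
        Polynomial.C (coeff (n + 1) (wser s ^ (j + 1))) * (-Polynomial.X) ^ j := by
  rw [Q_eq, Polynomial.sum_comp]
  exact Finset.sum_congr rfl fun j _ => by
    rw [Polynomial.mul_comp, Polynomial.C_comp, Polynomial.X_pow_comp]

lemma Qcoeff0 (n : ℕ) : (Polynomial.reflect n (truncSeq (Sser s) n)).coeff 0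
    = coeff (n + 1) (wser s) := by
  rw [Polynomial.coeff_reflect, Polynomial.revAt_le (Nat.zero_le n), Nat.sub_zero,
    keyL s n n 1 (by omega), pow_one]

lemma kid (n k : ℕ) : coeff (n + 2) (wser s ^ (k + 2))
    = ∑ p ∈ antidiagonal n,
        coeff (p.1 + 1) (wser s) * coeff (p.2 + 1) (wser s ^ (k + 1)) := by
  have e1 : wser s ^ (k + 2) = X * (X * (Bser s * (Bser s * wser s ^ k))) := by
    rw [wpow_succ s (k+1), wpow_succ s k]; ring
  rw [e1, coeff_succ_X_mul, coeff_succ_X_mul, PowerSeries.coeff_mul]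
  refine Finset.sum_congr rfl fun p _ => ?_
  rw [wpow_succ s k, coeff_succ_X_mul, coeff_wser_succ']

end Stmt9Aux

open Stmt9Aux in
/-- with `Qₙ(x) = xⁿPₙ(1/x)` and `Q(0)` the sequence of constant terms
`Qₙ(0)`, the `x`-interpolated invert transform of `Q(0)` (defined by
`∑ Iₙ(x)tⁿ = A(t)/(1 + x·t·A(t))`) is the sequence `Qₙ(−x)`: `I^x(Q(0)) = Q(−x)`. -/
theorem stmt9 {R : Type*} [CommRing R] (s : ℕ → R) :
    let S : PowerSeries R := PowerSeries.mk fun j => if j = 0 then 1 else s j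
    let Q : ℕ → Polynomial R := fun n => Polynomial.reflect n (truncSeq S n)
    let G0 : PowerSeries (Polynomial R) :=
      PowerSeries.mk fun n => Polynomial.C ((Q n).coeff 0)
    ∀ n : ℕ,
      PowerSeries.coeff n
        (G0 * PowerSeries.invOfUnit
          (1 + PowerSeries.C Polynomial.X * PowerSeries.X * G0) 1) =
      (Q n).comp (-Polynomial.X) := by
  intro S Q G0 n
  have hQ : ∀ i, Q i = Polynomial.reflect i (truncSeq (Sser s) i) := fun i => rfl
  set Ghat : PowerSeries (Polynomial R) :=
    PowerSeries.mk fun i => (Q i).comp (-Polynomial.X) with hG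
  set U : PowerSeries (Polynomial R) :=
    1 + PowerSeries.C Polynomial.X * PowerSeries.X * G0 with hU
  have hu : PowerSeries.constantCoeff U = ((1 : (Polynomial R)ˣ) : Polynomial R) := by
    simp [hU]
  have hG0def : G0 = PowerSeries.mk fun n => Polynomial.C ((Q n).coeff 0) := rfl
  have key : Ghat * U = G0 := by
    refine PowerSeries.ext fun N => ?_
    rw [hU, mul_add, mul_one, map_add]
    have hre : Ghat * (PowerSeries.C Polynomial.X * PowerSeries.X * G0)
        = PowerSeries.C Polynomial.X * (PowerSeries.X * (G0 * Ghat)) := by ring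
    rw [hre]
    cases N with
    | zero =>
      rw [PowerSeries.coeff_C_mul, coeff_zero_X_mul, mul_zero, add_zero, hG, hG0def]
      simp only [coeff_mk]
      rw [hQ 0, Qcomp s 0, Qcoeff0 s 0]
      simp
    | succ n =>
      rw [PowerSeries.coeff_C_mul, coeff_succ_X_mul, PowerSeries.coeff_mul, hG, hG0def]
      simp only [coeff_mk]
      rw [hQ (n+1), Qcomp s (n+1), Qcoeff0 s (n+1)]
      have hterm : ∀ p ∈ antidiagonal n,
          Polynomial.C ((Q p.1).coeff 0) * (Q p.2).comp (-Polynomial.X)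
            = Polynomial.C (PowerSeries.coeff (p.1 + 1) (wser s)) *
              ∑ k ∈ range (n + 1),
                Polynomial.C (PowerSeries.coeff (p.2 + 1) (wser s ^ (k + 1))) *
                  (-Polynomial.X) ^ k := by
        intro p hp
        have hp' := mem_antidiagonal.mp hp
        rw [hQ p.1, hQ p.2, Qcomp s p.2, Qcoeff0 s p.1]
        congr 1
        refine Finset.sum_subset (by intro x hx; simp_all; omega) ?_
        intro k hk hk'
        rw [coeff_wpow_zero s (by simp_all), map_zero, zero_mul]
      rw [Finset.sum_congr rfl hterm]
      -- transform the X * double-sum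
      have h2 : (Polynomial.X : Polynomial R) *
          ∑ p ∈ antidiagonal n,
            Polynomial.C (PowerSeries.coeff (p.1 + 1) (wser s)) *
              ∑ k ∈ range (n + 1),
                Polynomial.C (PowerSeries.coeff (p.2 + 1) (wser s ^ (k + 1))) *
                  (-Polynomial.X) ^ k
          = ∑ k ∈ range (n + 1),
              Polynomial.C (PowerSeries.coeff (n + 2) (wser s ^ (k + 2))) *
                (Polynomial.X * (-Polynomial.X) ^ k) := by
        rw [Finset.mul_sum]
        have hswap : ∀ p ∈ antidiagonal n,
            Polynomial.X * (Polynomial.C (PowerSeries.coeff (p.1 + 1) (wser s)) *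
              ∑ k ∈ range (n + 1),
                Polynomial.C (PowerSeries.coeff (p.2 + 1) (wser s ^ (k + 1))) *
                  (-Polynomial.X) ^ k)
            = ∑ k ∈ range (n + 1),
                Polynomial.C (PowerSeries.coeff (p.1 + 1) (wser s) *
                    PowerSeries.coeff (p.2 + 1) (wser s ^ (k + 1))) *
                  (Polynomial.X * (-Polynomial.X) ^ k) := by
          intro p _
          rw [Finset.mul_sum, Finset.mul_sum]
          refine Finset.sum_congr rfl fun k _ => ?_
          rw [map_mul]; ring
        rw [Finset.sum_congr rfl hswap, Finset.sum_comm]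
        refine Finset.sum_congr rfl fun k _ => ?_
        rw [kid s n k, map_sum, Finset.sum_mul]
      rw [h2, Finset.sum_range_succ']
      have hzero : (∑ i ∈ range (n + 1),
            Polynomial.C (PowerSeries.coeff (n + 2) (wser s ^ (i + 1 + 1))) *
              (-Polynomial.X) ^ (i + 1))
          + ∑ k ∈ range (n + 1),
              Polynomial.C (PowerSeries.coeff (n + 2) (wser s ^ (k + 2))) *
                (Polynomial.X * (-Polynomial.X) ^ k) = 0 := by
        rw [← Finset.sum_add_distrib]
        refine Finset.sum_eq_zero fun k _ => ?_
        rw [show k + 1 + 1 = k + 2 from rfl]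
        ring
      have hx0 : Polynomial.C (PowerSeries.coeff (n + 2) (wser s ^ (0 + 1))) *
          (-Polynomial.X : Polynomial R) ^ 0
          = Polynomial.C (PowerSeries.coeff (n + 2) (wser s)) := by
        simp
      rw [hx0]
      calc (∑ i ∈ range (n + 1),
            Polynomial.C (PowerSeries.coeff (n + 2) (wser s ^ (i + 1 + 1))) *
              (-Polynomial.X) ^ (i + 1))
            + Polynomial.C (PowerSeries.coeff (n + 2) (wser s))
            + ∑ k ∈ range (n + 1),
                Polynomial.C (PowerSeries.coeff (n + 2) (wser s ^ (k + 2))) *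
                  (Polynomial.X * (-Polynomial.X) ^ k)
          = Polynomial.C (PowerSeries.coeff (n + 2) (wser s))
            + ((∑ i ∈ range (n + 1),
                Polynomial.C (PowerSeries.coeff (n + 2) (wser s ^ (i + 1 + 1))) *
                  (-Polynomial.X) ^ (i + 1))
              + ∑ k ∈ range (n + 1),
                  Polynomial.C (PowerSeries.coeff (n + 2) (wser s ^ (k + 2))) *
                    (Polynomial.X * (-Polynomial.X) ^ k)) := by ring
        _ = Polynomial.C (PowerSeries.coeff (n + 2) (wser s)) := by rw [hzero, add_zero]
  have hG0 : G0 * PowerSeries.invOfUnit U 1 = Ghat := by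
    rw [← key, mul_assoc, PowerSeries.mul_invOfUnit U 1 hu, mul_one]
  rw [hG0, coeff_mk]
end

section
/- (Layman's theorem) Let a be a sequence and b = I(a) its invert transform, defined by (1 + t∑a_n t^n)(1 − t∑b_n t^n) = 1. Then for every n ≥ 1, det((a_{i+j})_{0≤i,j<n}) = det((b_{i+j})_{0≤i,j<n}); that is, a and b have the same Hankel transform. -/
open PowerSeries
open Finset

section aux
variable {R : Type*} [CommRing R]

private def hs (b : ℕ → R) : ℕ → R
  | 0 => 1
  | m+1 => -b m

private lemma key_rel (a b : ℕ → R)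
    (h : (1 + X * PowerSeries.mk a) * (1 - X * PowerSeries.mk b) = 1) (n : ℕ) :
    a n - b n = ∑ k ∈ range n, a k * b (n - 1 - k) := by
  have hf : (PowerSeries.mk a - PowerSeries.mk b
      - X * (PowerSeries.mk a * PowerSeries.mk b) : R⟦X⟧) = 0 := by
    have hX : (X : R⟦X⟧) * (PowerSeries.mk a - PowerSeries.mk b
        - X * (PowerSeries.mk a * PowerSeries.mk b)) = 0 := by
      linear_combination h
    ext m
    simpa [coeff_succ_X_mul] using congrArg (coeff (m+1)) hX
  cases n with
  | zero => simpa using congrArg (coeff 0) hf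
  | succ n =>
      have h1 := congrArg (coeff (n+1)) hf
      rw [map_sub, map_sub, coeff_succ_X_mul, coeff_mul,
        Finset.Nat.sum_antidiagonal_eq_sum_range_succ_mk] at h1
      simp only [coeff_mk, map_zero] at h1
      have h2 : ∀ k ∈ range (n+1), a k * b (n + 1 - 1 - k) = a k * b (n - k) := by
        intro k hk; congr 1
      rw [Finset.sum_congr rfl h2]
      linear_combination h1

private lemma conv (a b : ℕ → R)
    (h : (1 + X * PowerSeries.mk a) * (1 - X * PowerSeries.mk b) = 1) (n : ℕ) :
    ∑ k ∈ range (n+1), hs b (n-k) * a k = b n := by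
  have hk := key_rel a b h n
  rw [Finset.sum_range_succ, Nat.sub_self]
  have h2 : ∀ k ∈ range n, hs b (n-k) * a k = -(a k * b (n-1-k)) := by
    intro k hk'
    have hnk : n - k = (n-1-k)+1 := by
      have := Finset.mem_range.mp hk'; omega
    rw [hnk]; show -b (n-1-k) * a k = _; ring
  rw [Finset.sum_congr rfl h2, Finset.sum_neg_distrib]
  show -∑ k ∈ range n, a k * b (n-1-k) + (1:R) * a n = b n
  linear_combination hk

private def TT (a b : ℕ → R) (i j : ℕ) : R := ∑ l ∈ range (j+1), hs b (j-l) * a (i+l)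

private lemma TT_shift (a b : ℕ → R) (i j : ℕ) :
    TT a b i (j+1) = TT a b (i+1) j - b j * a i := by
  unfold TT
  rw [Finset.sum_range_succ']
  have h2 : ∀ l ∈ range (j+1), hs b (j+1-(l+1)) * a (i+(l+1)) = hs b (j-l) * a (i+1+l) := by
    intro l hl
    congr 2 <;> omega
  rw [Finset.sum_congr rfl h2]
  simp only [Nat.sub_zero, Nat.add_zero, hs]
  ring

private def SS (a b : ℕ → R) (i j : ℕ) : R := ∑ k ∈ range (i+1), hs b (i-k) * TT a b k j

private lemma TT_zero (a b : ℕ → R)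
    (h : (1 + X * PowerSeries.mk a) * (1 - X * PowerSeries.mk b) = 1) (j : ℕ) :
    TT a b 0 j = b j := by
  unfold TT
  simpa using conv a b h j

private lemma SS_shift (a b : ℕ → R)
    (h : (1 + X * PowerSeries.mk a) * (1 - X * PowerSeries.mk b) = 1) (i j : ℕ) :
    SS a b i (j+1) = SS a b (i+1) j := by
  unfold SS
  conv_rhs => rw [Finset.sum_range_succ']
  have h2 : ∀ k ∈ range (i+1), hs b (i+1-(k+1)) * TT a b (k+1) j
      = hs b (i-k) * TT a b k (j+1) + b j * (hs b (i-k) * a k) := by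
    intro k hk
    have hik : i+1-(k+1) = i - k := by omega
    rw [hik, TT_shift]
    ring
  have h3 : ∑ k ∈ range (i+1), b j * (hs b (i-k) * a k)
      = b j * b i := by
    rw [← Finset.mul_sum, conv a b h i]
  rw [Finset.sum_congr rfl h2, Finset.sum_add_distrib, h3, TT_zero a b h,
    show hs b (i+1-0) = -b i from rfl]
  ring

private lemma SS_eq (a b : ℕ → R)
    (h : (1 + X * PowerSeries.mk a) * (1 - X * PowerSeries.mk b) = 1) (i j : ℕ) :
    SS a b i j = b (i+j) := by
  induction i generalizing j with
  | zero =>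
      unfold SS
      rw [Finset.sum_range_one]
      show hs b 0 * TT a b 0 j = b (0+j)
      rw [show hs b 0 = (1:R) from rfl, one_mul, TT_zero a b h, Nat.zero_add]
  | succ i ih =>
      rw [← SS_shift a b h, ih (j+1)]
      congr 1
      omega

private lemma range_to_fin {M : Type*} [AddCommMonoid M] {n : ℕ} (i : Fin n) (f : ℕ → M) :
    ∑ k ∈ range ((i:ℕ)+1), f k = ∑ k : Fin n, if (k:ℕ) ≤ (i:ℕ) then f k else 0 := by
  rw [Fin.sum_univ_eq_sum_range (fun k => if k ≤ (i:ℕ) then f k else 0) n]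
  rw [← Finset.sum_subset (Finset.range_subset_range.mpr i.isLt)
    (fun x _ hx => if_neg (by simp [Finset.mem_range] at hx; omega))]
  exact Finset.sum_congr rfl fun k hk => (if_pos (by
    have := Finset.mem_range.mp hk; omega)).symm

end aux


/-- Layman's theorem: if `b = I(a)` is the invert transform of `a`
(`(1 + t·A)(1 − t·B) = 1`), then `a` and `b` have the same Hankel transform:
`det((a_{i+j})_{0≤i,j<n}) = det((b_{i+j})_{0≤i,j<n})` for every `n ≥ 1`. -/
theorem stmt15 {R : Type*} [CommRing R] (a b : ℕ → R)
    (h : (1 + PowerSeries.X * PowerSeries.mk a) *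
          (1 - PowerSeries.X * PowerSeries.mk b) = 1)
    (n : ℕ) (hn : 1 ≤ n) :
    Matrix.det (Matrix.of fun i j : Fin n => a ((i : ℕ) + (j : ℕ))) =
      Matrix.det (Matrix.of fun i j : Fin n => b ((i : ℕ) + (j : ℕ))) := by
  set A : Matrix (Fin n) (Fin n) R := Matrix.of fun i j : Fin n => a ((i : ℕ) + (j : ℕ)) with hA
  set L : Matrix (Fin n) (Fin n) R :=
    Matrix.of (fun i k : Fin n => if (k:ℕ) ≤ (i:ℕ) then hs b ((i:ℕ)-(k:ℕ)) else 0) with hL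
  have htri : L.BlockTriangular OrderDual.toDual := by
    intro i k hik
    have hik' : (i:ℕ) < (k:ℕ) := hik
    simp only [hL, Matrix.of_apply]
    rw [if_neg (by omega)]
  have hdet : L.det = 1 := by
    rw [Matrix.det_of_lowerTriangular L htri]
    have : ∀ i : Fin n, L i i = 1 := by
      intro i
      simp only [hL, Matrix.of_apply, if_pos le_rfl, Nat.sub_self]
      rfl
    rw [Finset.prod_congr rfl fun i _ => this i, Finset.prod_const_one]
  have hmat : (Matrix.of fun i j : Fin n => b ((i : ℕ) + (j : ℕ))) = L * A * L.transpose := by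
    ext i j
    show b ((i:ℕ)+(j:ℕ)) = (L * A * L.transpose) i j
    have step1 : b ((i:ℕ)+(j:ℕ)) = ∑ k : Fin n, ∑ l : Fin n,
        (if (k:ℕ) ≤ (i:ℕ) then hs b ((i:ℕ)-(k:ℕ)) else 0) * a ((k:ℕ)+(l:ℕ)) *
          (if (l:ℕ) ≤ (j:ℕ) then hs b ((j:ℕ)-(l:ℕ)) else 0) := by
      rw [← SS_eq a b h (i:ℕ) (j:ℕ)]
      unfold SS TT
      rw [range_to_fin i (fun k => hs b ((i:ℕ)-k) * ∑ l ∈ range ((j:ℕ)+1), hs b ((j:ℕ)-l) * a (k+l))]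
      refine Finset.sum_congr rfl fun k _ => ?_
      split_ifs with hki
      · rw [Finset.mul_sum, range_to_fin j (fun l => hs b ((i:ℕ)-(k:ℕ)) * (hs b ((j:ℕ)-l) * a ((k:ℕ)+l)))]
        refine Finset.sum_congr rfl fun l _ => ?_
        split_ifs with hlj <;> ring
      · symm
        refine Finset.sum_eq_zero fun l _ => by ring
    rw [step1, Finset.sum_comm]
    simp only [Matrix.mul_apply, Matrix.transpose_apply, hL, hA, Matrix.of_apply,
      Finset.sum_mul]
  rw [hmat, Matrix.det_mul, Matrix.det_mul, hdet, Matrix.det_transpose, hdet, one_mul, mul_one]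
end

section
/- For every x, the Hankel transform of the interpolated invert transform I^x(a) = (I_0(x), I_1(x), ...) is independent of x: det((I_{i+j}(x))_{0≤i,j<n}) = det((a_{i+j})_{0≤i,j<n}) as polynomials in x, for every n ≥ 1. -/
open PowerSeries Finset

namespace Stmt16Aux

variable {R : Type*} [CommRing R]

noncomputable def Aa (a : ℕ → R) : PowerSeries (Polynomial R) :=
  PowerSeries.mk fun m => Polynomial.C (a m)

noncomputable def Uu (a : ℕ → R) : PowerSeries (Polynomial R) :=
  1 + PowerSeries.C Polynomial.X * PowerSeries.X * Aa a

noncomputable def Ff (a : ℕ → R) : PowerSeries (Polynomial R) :=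
  PowerSeries.invOfUnit (Uu a) 1

noncomputable def Bb (a : ℕ → R) : PowerSeries (Polynomial R) := Aa a * Ff a

noncomputable def f (a : ℕ → R) (m : ℕ) : Polynomial R := coeff m (Ff a)

noncomputable def b (a : ℕ → R) (m : ℕ) : Polynomial R := coeff m (Bb a)

lemma hU (a : ℕ → R) : constantCoeff (Uu a) = 1 := by
  simp [Uu, mul_assoc]

lemma UF (a : ℕ → R) : Uu a * Ff a = 1 :=
  PowerSeries.mul_invOfUnit _ 1 (by simpa using hU a)

lemma F_eq (a : ℕ → R) :
    Ff a = 1 - PowerSeries.C Polynomial.X * PowerSeries.X * Bb a := by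
  have h := UF a
  rw [Uu, add_mul, one_mul] at h
  rw [Bb, ← mul_assoc]
  linear_combination h

lemma f_zero (a : ℕ → R) : f a 0 = 1 := by
  have := congrArg (constantCoeff (R := Polynomial R)) (F_eq a)
  simpa [f, mul_assoc, map_mul, ← PowerSeries.coeff_zero_eq_constantCoeff,
    PowerSeries.coeff_zero_X_mul] using this

lemma f_succ (a : ℕ → R) (m : ℕ) : f a (m + 1) = -Polynomial.X * b a m := by
  have := congrArg (coeff (R := Polynomial R) (m + 1)) (F_eq a)
  rw [map_sub, mul_assoc, PowerSeries.coeff_C_mul, PowerSeries.coeff_succ_X_mul] at this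
  simpa [f, b, PowerSeries.coeff_one] using this

lemma b_eq (a : ℕ → R) (m : ℕ) :
    b a m = ∑ k ∈ range (m + 1), Polynomial.C (a k) * f a (m - k) := by
  rw [b, Bb, PowerSeries.coeff_mul, Finset.Nat.sum_antidiagonal_eq_sum_range_succ_mk]
  simp [Aa, f]

/-- The double sum `S i j = ∑_{k≤i} ∑_{l≤j} f_{i-k} a_{k+l} f_{j-l}`. -/
noncomputable def S (a : ℕ → R) (i j : ℕ) : Polynomial R :=
  ∑ k ∈ range (i + 1), ∑ l ∈ range (j + 1),
    f a (i - k) * Polynomial.C (a (k + l)) * f a (j - l)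

lemma S_zero (a : ℕ → R) (i : ℕ) : S a i 0 = b a i := by
  rw [S, b_eq]
  refine Finset.sum_congr rfl fun k hk => ?_
  simp [f_zero, mul_comm]

lemma S_step (a : ℕ → R) (i j : ℕ) : S a (i + 1) j = S a i (j + 1) := by
  have hL : S a (i + 1) j =
      (∑ k ∈ range (i + 1), ∑ l ∈ range (j + 1),
        f a (i - k) * Polynomial.C (a (k + l + 1)) * f a (j - l)) +
      f a (i + 1) * b a j := by
    rw [S, Finset.sum_range_succ']
    congr 1
    · refine Finset.sum_congr rfl fun k hk => Finset.sum_congr rfl fun l hl => ?_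
      have h1 : i + 1 - (k + 1) = i - k := by omega
      have h2 : k + 1 + l = k + l + 1 := by omega
      rw [h1, h2]
    · rw [b_eq, Finset.mul_sum]
      refine Finset.sum_congr rfl fun l hl => ?_
      have h1 : i + 1 - 0 = i + 1 := rfl
      have h2 : (0 : ℕ) + l = l := by omega
      rw [h1, h2, mul_assoc]
  have hR : S a i (j + 1) =
      (∑ k ∈ range (i + 1), ∑ l ∈ range (j + 1),
        f a (i - k) * Polynomial.C (a (k + l + 1)) * f a (j - l)) +
      f a (j + 1) * b a i := by
    rw [S]
    have hsplit : ∀ k ∈ range (i + 1),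
        ∑ l ∈ range (j + 1 + 1), f a (i - k) * Polynomial.C (a (k + l)) * f a (j + 1 - l) =
        (∑ l ∈ range (j + 1), f a (i - k) * Polynomial.C (a (k + l + 1)) * f a (j - l)) +
        f a (i - k) * Polynomial.C (a k) * f a (j + 1) := by
      intro k hk
      rw [Finset.sum_range_succ']
      congr 1
      · refine Finset.sum_congr rfl fun l hl => ?_
        have h1 : j + 1 - (l + 1) = j - l := by omega
        have h2 : k + (l + 1) = k + l + 1 := by omega
        rw [h1, h2]
    rw [Finset.sum_congr rfl hsplit, Finset.sum_add_distrib]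
    congr 1
    rw [b_eq, Finset.mul_sum]
    refine Finset.sum_congr rfl fun k hk => ?_
    ring
  rw [hL, hR, f_succ, f_succ]
  ring

lemma S_eq (a : ℕ → R) (j i : ℕ) : S a i j = b a (i + j) := by
  induction j generalizing i with
  | zero => simpa using S_zero a i
  | succ j ih =>
      rw [← S_step, ih (i + 1)]
      congr 1
      omega

lemma sum_ite_range {M : Type*} [AddCommMonoid M] {n i : ℕ} (h : i < n) (g : ℕ → M) :
    ∑ k ∈ range n, (if k ≤ i then g k else 0) = ∑ k ∈ range (i + 1), g k := by
  rw [← Finset.sum_filter]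
  congr 1
  ext k
  simp only [Finset.mem_filter, Finset.mem_range, Nat.lt_succ_iff]
  omega

lemma hankel (a : ℕ → R) (n : ℕ) :
    Matrix.det (Matrix.of fun i j : Fin n => b a ((i : ℕ) + (j : ℕ))) =
      Polynomial.C (Matrix.det (Matrix.of fun i j : Fin n => a ((i : ℕ) + (j : ℕ)))) := by
  classical
  set L : Matrix (Fin n) (Fin n) (Polynomial R) :=
    Matrix.of fun i k : Fin n => if (k : ℕ) ≤ (i : ℕ) then f a ((i : ℕ) - (k : ℕ)) else 0
    with hLdef
  set M : Matrix (Fin n) (Fin n) (Polynomial R) :=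
    (Polynomial.C : R →+* Polynomial R).mapMatrix
      (Matrix.of fun i j : Fin n => a ((i : ℕ) + (j : ℕ))) with hMdef
  have hLtri : L.BlockTriangular (OrderDual.toDual) := by
    intro i j hij
    have hij' : ¬ ((j : ℕ) ≤ (i : ℕ)) := by
      simp only [OrderDual.toDual_lt_toDual] at hij
      exact not_le.mpr hij
    rw [hLdef]
    simp only [Matrix.of_apply]
    rw [if_neg hij']
  have hLdet : L.det = 1 := by
    rw [Matrix.det_of_lowerTriangular L hLtri]
    have hdiag : ∀ i : Fin n, L i i = 1 := by
      intro i
      rw [hLdef]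
      simp only [Matrix.of_apply, le_refl, if_true, Nat.sub_self]
      exact f_zero a
    simp [hdiag]
  have step1 : ∀ (i l : Fin n), (L * M) i l =
      ∑ k ∈ range ((i : ℕ) + 1), f a ((i : ℕ) - k) * Polynomial.C (a (k + (l : ℕ))) := by
    intro i l
    rw [Matrix.mul_apply]
    have e1 : ∑ k : Fin n, L i k * M k l =
        ∑ k ∈ range n,
          (if k ≤ (i : ℕ) then f a ((i : ℕ) - k) * Polynomial.C (a (k + (l : ℕ))) else 0) := by
      rw [← Fin.sum_univ_eq_sum_range
        (fun k => if k ≤ (i : ℕ) then f a ((i : ℕ) - k) * Polynomial.C (a (k + (l : ℕ))) else 0) n]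
      refine Finset.sum_congr rfl fun k _ => ?_
      rw [hLdef, hMdef]
      simp only [Matrix.of_apply, RingHom.mapMatrix_apply, Matrix.map_apply, ite_mul, zero_mul]
    rw [e1, sum_ite_range i.isLt]
  have key : (Matrix.of fun i j : Fin n => b a ((i : ℕ) + (j : ℕ))) = L * M * L.transpose := by
    ext i j
    rw [Matrix.mul_apply]
    have e2 : ∑ l : Fin n, (L * M) i l * L.transpose l j =
        ∑ l ∈ range n, (if l ≤ (j : ℕ) then
          (∑ k ∈ range ((i : ℕ) + 1), f a ((i : ℕ) - k) * Polynomial.C (a (k + l))) *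
            f a ((j : ℕ) - l) else 0) := by
      rw [← Fin.sum_univ_eq_sum_range
        (fun l => if l ≤ (j : ℕ) then
          (∑ k ∈ range ((i : ℕ) + 1), f a ((i : ℕ) - k) * Polynomial.C (a (k + l))) *
            f a ((j : ℕ) - l) else 0) n]
      refine Finset.sum_congr rfl fun l _ => ?_
      rw [step1 i l, hLdef]
      simp only [Matrix.transpose_apply, Matrix.of_apply, mul_ite, mul_zero]
    rw [e2, sum_ite_range j.isLt]
    have e3 : ∑ l ∈ range ((j : ℕ) + 1),
        (∑ k ∈ range ((i : ℕ) + 1), f a ((i : ℕ) - k) * Polynomial.C (a (k + l))) *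
          f a ((j : ℕ) - l) = S a (i : ℕ) (j : ℕ) := by
      rw [S, Finset.sum_comm]
      refine Finset.sum_congr rfl fun l _ => ?_
      rw [Finset.sum_mul]
    rw [e3, S_eq]
    simp
  rw [key, Matrix.det_mul, Matrix.det_mul, Matrix.det_transpose, hLdet, one_mul, mul_one,
    hMdef, ← RingHom.map_det]

end Stmt16Aux

/-- the Hankel transform of the interpolated invert transform
`I^x(a) = (I₀(x), I₁(x), …)`, defined by `∑ Iₙ(x)tⁿ = A(t)/(1 + x·t·A(t))` over the
polynomial ring in `x`, is independent of `x`: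
`det((I_{i+j}(x))_{0≤i,j<n}) = det((a_{i+j})_{0≤i,j<n})` for every `n ≥ 1`. -/
theorem stmt16 {R : Type*} [CommRing R] (a : ℕ → R) (n : ℕ) (hn : 1 ≤ n) :
    let A : PowerSeries (Polynomial R) := PowerSeries.mk fun m => Polynomial.C (a m)
    let B : PowerSeries (Polynomial R) :=
      A * PowerSeries.invOfUnit
        (1 + PowerSeries.C Polynomial.X * PowerSeries.X * A) 1
    Matrix.det (Matrix.of fun i j : Fin n =>
        PowerSeries.coeff ((i : ℕ) + (j : ℕ)) B) =
      Polynomial.C (Matrix.det (Matrix.of fun i j : Fin n => a ((i : ℕ) + (j : ℕ)))) := by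
  intro A B
  exact Stmt16Aux.hankel a n
end
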